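/- arXiv:1409.2117 — 6 statements merged into one kernel-verified Lean document; each statement's English description precedes it below -/
import Mathlib

section
/- Let G be a connected vertex-transitive k-regular simple graph. If the girth of G is greater than 3, or |V(G)| < 2k, then d_G(X) ≥ 2k − 2 for every subset X of V(G) with 2 ≤ |X| ≤ |V(G)| − 2. -/
open SimpleGraph

section Defs

variable {V : Type*}

/-- A simple graph is vertex-transitive if any vertex can be mapped to any other
by a graph automorphism. -/
def VertexTransitive (G : SimpleGraph V) : Prop :=
  ∀ x y : V, ∃ φ : G ≃g G, φ x = y

/-- A graph is `p`-factor-critical if the removal of any set of `p` vertices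
results in a graph with a perfect matching. -/
def PFactorCritical (G : SimpleGraph V) (p : ℕ) : Prop :=
  ∀ X : Set V, X.ncard = p → ∃ M : (G.induce Xᶜ).Subgraph, M.IsPerfectMatching

/-- A graph is factor-critical if the removal of any single vertex results in a
graph with a perfect matching. -/
def IsFactorCritical {W : Type*} (H : SimpleGraph W) : Prop :=
  ∀ v : W, ∃ M : (H.induce ({v}ᶜ : Set W)).Subgraph, M.IsPerfectMatching

/-- `∇(X)`: the set of edges of `G` with exactly one end in `X`. -/
def edgeBoundary (G : SimpleGraph V) (X : Set V) : Set (Sym2 V) :=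
  {e | e ∈ G.edgeSet ∧ ∃ x ∈ X, ∃ y ∈ Xᶜ, e = s(x, y)}

/-- The set of edges of `G` with both ends in `X`. -/
def edgesWithin (G : SimpleGraph V) (X : Set V) : Set (Sym2 V) :=
  {e | e ∈ G.edgeSet ∧ ∀ v ∈ e, v ∈ X}

/-- The set of edges of `G` with one end in `A` and the other end in `S \ A`
(i.e. the edge boundary of `A` inside the induced subgraph `G[S]` when `A ⊆ S`). -/
def inducedEdgeBoundary (G : SimpleGraph V) (S A : Set V) : Set (Sym2 V) :=
  {e | e ∈ G.edgeSet ∧ ∃ x ∈ A, ∃ y ∈ S \ A, e = s(x, y)}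

/-- `F` is an `s`-restricted edge-cut of `G` if deleting `F` disconnects `G` and
every component of `G − F` has at least `s` vertices. -/
def IsRestrictedEdgeCut (G : SimpleGraph V) (s : ℕ) (F : Set (Sym2 V)) : Prop :=
  F ⊆ G.edgeSet ∧ ¬ (G.deleteEdges F).Connected ∧
    ∀ c : (G.deleteEdges F).ConnectedComponent, s ≤ c.supp.ncard

/-- `λ_s(G)`: the minimum cardinality of an `s`-restricted edge-cut of `G`. -/
noncomputable def lambdaS (G : SimpleGraph V) (s : ℕ) : ℕ :=
  sInf (Set.ncard '' {F | IsRestrictedEdgeCut G s F})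

/-- A `λ_s`-fragment: a vertex set whose edge boundary is an `s`-restricted
edge-cut of minimum cardinality `λ_s(G)`. -/
def IsLambdaFragment (G : SimpleGraph V) (s : ℕ) (X : Set V) : Prop :=
  IsRestrictedEdgeCut G s (edgeBoundary G X) ∧ (edgeBoundary G X).ncard = lambdaS G s

/-- A `λ_s`-atom: a `λ_s`-fragment of minimum cardinality. -/
def IsLambdaAtom (G : SimpleGraph V) (s : ℕ) (X : Set V) : Prop :=
  IsLambdaFragment G s X ∧ ∀ Y : Set V, IsLambdaFragment G s Y → X.ncard ≤ Y.ncard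

/-- The odd girth of `G`: the length of a shortest odd cycle of `G`. -/
noncomputable def oddGirth (G : SimpleGraph V) : ℕ :=
  sInf {n | Odd n ∧ ∃ (v : V) (c : G.Walk v v), c.IsCycle ∧ c.length = n}

/-- `X` is an independent set of `G`. -/
def IsIndependentSet (G : SimpleGraph V) (X : Set V) : Prop :=
  ∀ x ∈ X, ∀ y ∈ X, ¬ G.Adj x y

/-- The independence number `α(G)`. -/
noncomputable def indepNum (G : SimpleGraph V) : ℕ :=
  sSup {n | ∃ X : Set V, IsIndependentSet G X ∧ X.ncard = n}

/-- The number of trivial (single-vertex) components of `G − X`. -/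
noncomputable def trivialComponentCount (G : SimpleGraph V) (X : Set V) : ℕ :=
  {c : (G.induce Xᶜ).ConnectedComponent | c.supp.ncard = 1}.ncard

/-- The number of odd components of `G − X`. -/
noncomputable def oddComponentCount (G : SimpleGraph V) (X : Set V) : ℕ :=
  {c : (G.induce Xᶜ).ConnectedComponent | Odd c.supp.ncard}.ncard

/-- The number of nontrivial components of `G − X`. -/
noncomputable def nontrivialComponentCount (G : SimpleGraph V) (X : Set V) : ℕ :=
  {c : (G.induce Xᶜ).ConnectedComponent | 2 ≤ c.supp.ncard}.ncard

/-- An imprimitive block of `G`: a proper non-empty vertex set that every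
automorphism either fixes setwise or maps to a disjoint set. -/
def IsImprimitiveBlock (G : SimpleGraph V) (X : Set V) : Prop :=
  X.Nonempty ∧ X ≠ Set.univ ∧ ∀ φ : G ≃g G, (⇑φ) '' X = X ∨ ((⇑φ) '' X) ∩ X = ∅

/-- A connected graph is `q`-extendable if it has a perfect matching and every
matching of size `q` is contained in a perfect matching. -/
def Extendable (G : SimpleGraph V) (q : ℕ) : Prop :=
  (∃ M : G.Subgraph, M.IsPerfectMatching) ∧
    ∀ M : G.Subgraph, M.IsMatching → M.edgeSet.ncard = q →
      ∃ P : G.Subgraph, P.IsPerfectMatching ∧ M ≤ P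

end Defs

/-!
Call `s` admissible if `2 ≤ |s| ≤ |V| - 2`. If `|V| < 2k`, an admissible `s` with `2|s| ≤ |V|`
has fewer than `k` vertices, each of which sends at least `k + 1 - |s|` edges out of `s`, and
`|s| (k + 1 - |s|) ≥ 2k - 2`.

If `G` is triangle-free and some admissible set has `d(s) < 2k - 2`, take an atom `A`: an
admissible set minimising `d`, and then `|A|`. Minimality gives `2|A| ≤ |V|`, `|A| ≥ 3`, and
(removing one vertex) that every vertex of `A` has more than `k/2` neighbours in `A`. So if an
automorphic image `φ(A) ≠ A` meets `A` in `w`, then `w` has a neighbour in `φ(A) ∩ A`, and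
submodularity of `d` makes `φ(A) ∩ A` an admissible set with `d = d(A)` and fewer vertices.
Hence `A` is a block of the automorphism group, and vertex-transitivity makes `G[A]` `r`-regular
with `k < 2r`. Then `d(A) = |A| (k - r)`; this vanishes if `r = k`, contradicting connectivity,
and otherwise adjacent vertices of `A` have disjoint neighbourhoods in `A`, so `|A| ≥ 2r` and
`d(A) ≥ 2r (k - r) ≥ 2k - 2`.
-/

namespace VertexTransitiveCut

open Finset

lemma cliqueFree_three_of_three_lt_girth {V : Type*} {G : SimpleGraph V} (h : 3 < G.girth) :
    G.CliqueFree 3 := fun s hs => by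
  obtain ⟨u, w, hw, hlen⟩ := G.is3Clique_iff_exists_cycle_length_three.mp ⟨s, hs⟩
  have := G.girth_le_length hw
  omega

variable {V : Type*} {G : SimpleGraph V} [DecidableRel G.Adj] {k : ℕ} {s t A : Finset V} {u v : V}

variable (G) in
def degreeIn (t : Finset V) (v : V) : ℕ := #{w ∈ t | G.Adj v w}

lemma card_interedges_eq_sum (s t : Finset V) :
    #(G.interedges s t) = ∑ v ∈ s, degreeIn G t v := by
  simp only [SimpleGraph.interedges_def, card_filter, sum_product, degreeIn]

lemma card_interedges_comm (s t : Finset V) : #(G.interedges s t) = #(G.interedges t s) :=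
  have : Std.Symm G.Adj := G.symm
  Rel.card_interedges_comm s t

lemma degreeIn_map (φ : G ≃g G) (t : Finset V) (v : V) :
    degreeIn G (t.map φ.toEquiv.toEmbedding) (φ v) = degreeIn G t v := by
  simp only [degreeIn, filter_map, card_map, Function.comp_apply, Equiv.coe_toEmbedding,
    RelIso.coe_fn_toEquiv, SimpleGraph.Iso.map_adj_iff]

section DecidableEq

variable [DecidableEq V]

lemma degreeIn_union {t₁ t₂ : Finset V} (h : Disjoint t₁ t₂) (v : V) :
    degreeIn G (t₁ ∪ t₂) v = degreeIn G t₁ v + degreeIn G t₂ v := by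
  rw [degreeIn, filter_union, card_union_of_disjoint (disjoint_filter_filter h)]; rfl

lemma degreeIn_erase_self (s : Finset V) (v : V) : degreeIn G (s.erase v) v = degreeIn G s v := by
  rw [degreeIn, filter_erase, erase_eq_of_notMem (by simp)]; rfl

lemma degreeIn_le_card_sub_one (hv : v ∈ s) : degreeIn G s v ≤ #s - 1 := by
  rw [← degreeIn_erase_self, ← card_erase_of_mem hv]
  exact card_filter_le _ _

lemma degreeIn_add_degreeIn_le_card (hG : G.CliqueFree 3) (huv : G.Adj u v) :
    degreeIn G s u + degreeIn G s v ≤ #s := by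
  have hdisj : Disjoint {w ∈ s | G.Adj u w} {w ∈ s | G.Adj v w} :=
    disjoint_filter.mpr fun w _ huw hvw =>
      hG {u, v, w} (SimpleGraph.is3Clique_triple_iff.mpr ⟨huv, huw, hvw⟩)
  rw [degreeIn, degreeIn, ← card_union_of_disjoint hdisj]
  exact card_le_card (union_subset (filter_subset _ _) (filter_subset _ _))

end DecidableEq

variable [Fintype V] [DecidableEq V]

variable (G) in
def cutSize (s : Finset V) : ℕ := #(G.interedges s sᶜ)

def IsAdmissible (s : Finset V) : Prop := 2 ≤ #s ∧ #s + 2 ≤ Fintype.card V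

lemma degreeIn_add_degreeIn_compl (hreg : G.IsRegularOfDegree k) (t : Finset V) (v : V) :
    degreeIn G t v + degreeIn G tᶜ v = k := by
  rw [← degreeIn_union disjoint_compl_right, union_compl, ← hreg v,
    ← card_neighborFinset_eq_degree, degreeIn]
  congr 1
  ext w
  simp

lemma exists_adj_mem_inter_of_lt (hreg : G.IsRegularOfDegree k)
    (hs : k < 2 * degreeIn G s v) (ht : k < 2 * degreeIn G t v) :
    ∃ w ∈ s ∩ t, G.Adj v w := by
  have hsub : ∀ r : Finset V, {w ∈ r | G.Adj v w} ⊆ G.neighborFinset v := fun r w hw => by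
    simpa using (mem_filter.mp hw).2
  obtain ⟨w, hw⟩ := inter_nonempty_of_card_lt_card_add_card (hsub s) (hsub t)
    (by rw [card_neighborFinset_eq_degree, hreg v]; unfold degreeIn at hs ht; omega)
  simp only [mem_inter, mem_filter] at hw
  exact ⟨w, mem_inter.mpr ⟨hw.1.1, hw.2.1⟩, hw.1.2⟩

lemma cutSize_eq_sum (s : Finset V) : cutSize G s = ∑ v ∈ s, degreeIn G sᶜ v :=
  card_interedges_eq_sum s sᶜ

lemma cutSize_compl (s : Finset V) : cutSize G sᶜ = cutSize G s := by
  rw [cutSize, cutSize, compl_compl, card_interedges_comm]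

lemma cutSize_inter_add_cutSize_union_le (s t : Finset V) :
    cutSize G (s ∩ t) + cutSize G (s ∪ t) ≤ cutSize G s + cutSize G t := by
  have hunion : G.interedges (s ∩ t) (s ∩ t)ᶜ ∪ G.interedges (s ∪ t) (s ∪ t)ᶜ ⊆
      G.interedges s sᶜ ∪ G.interedges t tᶜ := by
    intro p
    simp only [mem_union, SimpleGraph.mem_interedges_iff, mem_compl, mem_inter]
    tauto
  have hinter : G.interedges (s ∩ t) (s ∩ t)ᶜ ∩ G.interedges (s ∪ t) (s ∪ t)ᶜ ⊆
      G.interedges s sᶜ ∩ G.interedges t tᶜ := by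
    intro p
    simp only [mem_inter, SimpleGraph.mem_interedges_iff, mem_compl, mem_union]
    tauto
  unfold cutSize
  rw [← card_union_add_card_inter, ← card_union_add_card_inter (G.interedges s sᶜ)]
  exact add_le_add (card_le_card hunion) (card_le_card hinter)

lemma cutSize_erase_add (hv : v ∈ s) :
    cutSize G (s.erase v) + degreeIn G sᶜ v = cutSize G s + degreeIn G s v := by
  have hcompl : (s.erase v)ᶜ = {v} ∪ sᶜ := by
    ext w
    simp only [mem_compl, mem_erase, mem_union, mem_singleton]
    tauto
  have hdisj : Disjoint {v} sᶜ := by simpa using hv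
  have hnbrs : ∑ u ∈ s.erase v, degreeIn G {v} u = degreeIn G s v := by
    rw [← card_interedges_eq_sum, card_interedges_comm, card_interedges_eq_sum, sum_singleton,
      degreeIn_erase_self]
  rw [cutSize_eq_sum, hcompl, cutSize_eq_sum, ← add_sum_erase s _ hv]
  simp only [degreeIn_union hdisj, sum_add_distrib, hnbrs]
  ring

lemma cutSize_map (φ : G ≃g G) (s : Finset V) :
    cutSize G (s.map φ.toEquiv.toEmbedding) = cutSize G s := by
  have hcompl : (s.map φ.toEquiv.toEmbedding)ᶜ = sᶜ.map φ.toEquiv.toEmbedding := by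
    ext x; simp
  rw [cutSize_eq_sum, cutSize_eq_sum, hcompl, sum_map]
  exact sum_congr rfl fun v _ => degreeIn_map φ sᶜ v

lemma cutSize_pos (hconn : G.Connected) (hs : s.Nonempty) (hsc : sᶜ.Nonempty) :
    0 < cutSize G s := by
  obtain ⟨u, hu⟩ := hs
  obtain ⟨v, hv⟩ := hsc
  obtain ⟨d, -, hd₁, hd₂⟩ := ((hconn u v).some).exists_boundary_dart (↑s) hu (by simpa using hv)
  exact card_pos.mpr ⟨_, G.mk_mem_interedges_iff.mpr ⟨hd₁, by simpa using hd₂, d.adj⟩⟩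

lemma card_mul_le_cutSize (hreg : G.IsRegularOfDegree k) (s : Finset V) :
    #s * (k + 1 - #s) ≤ cutSize G s := by
  have hout : ∀ v ∈ s, k + 1 - #s ≤ degreeIn G sᶜ v := fun v hv => by
    have := degreeIn_add_degreeIn_compl hreg s v
    have := degreeIn_le_card_sub_one (G := G) hv
    have := card_pos.mpr ⟨v, hv⟩
    omega
  simpa only [cutSize_eq_sum, smul_eq_mul] using card_nsmul_le_sum _ _ _ hout

lemma cutSize_eq_card_mul (hreg : G.IsRegularOfDegree k) {r : ℕ}
    (hA : ∀ v ∈ A, degreeIn G A v = r) : cutSize G A = #A * (k - r) := by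
  rw [cutSize_eq_sum, sum_congr rfl fun v hv => ?_, sum_const, smul_eq_mul]
  have := degreeIn_add_degreeIn_compl hreg A v
  rw [hA v hv] at this
  omega

lemma ncard_edgeBoundary_coe (s : Finset V) : (edgeBoundary G ↑s).ncard = cutSize G s := by
  have himage : edgeBoundary G ↑s = (fun p : V × V => s(p.1, p.2)) '' ↑(G.interedges s sᶜ) := by
    ext e
    simp only [edgeBoundary, Set.mem_ofPred_eq, Set.mem_image, mem_coe, Set.mem_compl_iff,
      Prod.exists, G.mk_mem_interedges_iff, mem_compl]
    constructor
    · rintro ⟨he, x, hx, y, hy, rfl⟩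
      exact ⟨x, y, ⟨hx, hy, he⟩, rfl⟩
    · rintro ⟨x, y, ⟨hx, hy, hxy⟩, rfl⟩
      exact ⟨hxy, x, hx, y, hy, rfl⟩
  have hinj : Set.InjOn (fun p : V × V => s(p.1, p.2)) ↑(G.interedges s sᶜ) := by
    rintro ⟨a, b⟩ hab ⟨c, d⟩ hcd h
    simp only [mem_coe, G.mk_mem_interedges_iff, mem_compl] at hab hcd
    rcases Sym2.eq_iff.mp h with ⟨rfl, rfl⟩ | ⟨rfl, rfl⟩
    · rfl
    · exact absurd hab.1 hcd.2.1
  rw [himage, hinj.ncard_image, Set.ncard_coe_finset, cutSize]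

lemma IsAdmissible.compl (hs : IsAdmissible s) : IsAdmissible sᶜ := by
  obtain ⟨h₁, h₂⟩ := hs
  constructor <;> rw [card_compl] <;> omega

lemma two_mul_sub_two_le_cutSize_of_card_lt (hreg : G.IsRegularOfDegree k)
    (hn : Fintype.card V < 2 * k) (hs : IsAdmissible s) : 2 * k - 2 ≤ cutSize G s := by
  wlog hhalf : 2 * #s ≤ Fintype.card V generalizing s
  · rw [← cutSize_compl]
    exact this hs.compl (by rw [card_compl]; have := card_le_univ s; omega)
  have hcut := card_mul_le_cutSize hreg s
  obtain ⟨m, hm⟩ : ∃ m, #s = m + 2 := ⟨#s - 2, by have := hs.1; omega⟩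
  obtain ⟨l, hl⟩ : ∃ l, k + 1 - #s = l + 2 := ⟨k + 1 - #s - 2, by omega⟩
  rw [hl, hm] at hcut
  have : 2 * k - 2 = 2 * m + 2 * l + 4 := by omega
  nlinarith

variable (G) in
structure IsCutAtom (A : Finset V) : Prop where
  isAdmissible : IsAdmissible A
  cutSize_le : ∀ s, IsAdmissible s → cutSize G A ≤ cutSize G s
  card_le : ∀ s, IsAdmissible s → cutSize G s = cutSize G A → #A ≤ #s

lemma exists_isCutAtom (h : ∃ s : Finset V, IsAdmissible s) : ∃ A, IsCutAtom G A := by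
  classical
  obtain ⟨s, hs⟩ := h
  obtain ⟨s₀, hs₀, hmin⟩ :=
    exists_min_image {s | IsAdmissible s} (cutSize G) ⟨s, mem_filter.mpr ⟨mem_univ _, hs⟩⟩
  obtain ⟨A, hA, hAmin⟩ := exists_min_image {s | IsAdmissible s ∧ cutSize G s = cutSize G s₀} card
    ⟨s₀, mem_filter.mpr ⟨mem_univ _, (mem_filter.mp hs₀).2, rfl⟩⟩
  obtain ⟨hAp, hAcut⟩ := (mem_filter.mp hA).2
  refine ⟨A, hAp, fun t ht => hAcut ▸ hmin t (by simpa using ht), fun t ht htcut => ?_⟩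
  exact hAmin t (by simpa [ht] using htcut.trans hAcut)

namespace IsCutAtom

lemma two_mul_card_le (hA : IsCutAtom G A) : 2 * #A ≤ Fintype.card V := by
  have := hA.card_le Aᶜ hA.isAdmissible.compl (cutSize_compl A)
  rw [card_compl] at this
  omega

lemma three_le_card (hreg : G.IsRegularOfDegree k) (hA : IsCutAtom G A)
    (hcut : cutSize G A < 2 * k - 2) : 3 ≤ #A := by
  by_contra! h
  have hpair := card_mul_le_cutSize hreg A
  rw [show #A = 2 by have := hA.isAdmissible.1; omega] at hpair
  omega

lemma lt_two_mul_degreeIn (hreg : G.IsRegularOfDegree k) (hA : IsCutAtom G A) (h3 : 3 ≤ #A)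
    (hv : v ∈ A) : k < 2 * degreeIn G A v := by
  have hcard := card_erase_of_mem hv
  have hadm : IsAdmissible (A.erase v) := ⟨by omega, by have := hA.isAdmissible.2; omega⟩
  have hle := hA.cutSize_le _ hadm
  have hne : cutSize G (A.erase v) ≠ cutSize G A := fun h => by
    have := hA.card_le _ hadm h
    omega
  have := cutSize_erase_add (G := G) hv
  have := degreeIn_add_degreeIn_compl hreg A v
  omega

lemma map (hA : IsCutAtom G A) (φ : G ≃g G) : IsCutAtom G (A.map φ.toEquiv.toEmbedding) := by
  refine ⟨?_, fun s hs => ?_, fun s hs hcut => ?_⟩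
  · simpa only [IsAdmissible, card_map] using hA.isAdmissible
  · simpa only [cutSize_map] using hA.cutSize_le s hs
  · simpa only [card_map] using hA.card_le s hs (by rwa [cutSize_map] at hcut)

lemma map_eq_or_disjoint (hreg : G.IsRegularOfDegree k) (hA : IsCutAtom G A) (h3 : 3 ≤ #A)
    (φ : G ≃g G) : A.map φ.toEquiv.toEmbedding = A ∨ Disjoint (A.map φ.toEquiv.toEmbedding) A := by
  set B := A.map φ.toEquiv.toEmbedding
  have hB : IsCutAtom G B := hA.map φ
  have hBcard : #B = #A := card_map _
  by_contra! hBA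
  obtain ⟨w, hw⟩ := not_disjoint_iff_nonempty_inter.mp hBA.2
  obtain ⟨x, hx, hwx⟩ := exists_adj_mem_inter_of_lt hreg
    (hB.lt_two_mul_degreeIn hreg (hBcard ▸ h3) (mem_inter.mp hw).1)
    (hA.lt_two_mul_degreeIn hreg h3 (mem_inter.mp hw).2)
  have hinter_two : 2 ≤ #(B ∩ A) := one_lt_card.mpr ⟨w, hw, x, hx, hwx.ne⟩
  have hinter_lt : #(B ∩ A) < #A := by
    refine card_lt_card (ssubset_of_subset_of_ne inter_subset_right fun h => hBA.1 ?_)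
    exact eq_of_subset_of_card_le (h ▸ inter_subset_left) (hBcard.symm ▸ le_rfl) |>.symm
  have hunion := card_union_add_card_inter B A
  have hhalf := hA.two_mul_card_le
  have hsub := cutSize_inter_add_cutSize_union_le (G := G) B A
  have h₁ := hA.cutSize_le (B ∩ A) ⟨hinter_two, by omega⟩
  have h₂ := hA.cutSize_le (B ∪ A) ⟨by omega, by omega⟩
  have hcutB : cutSize G B = cutSize G A := cutSize_map φ A
  have := hA.card_le (B ∩ A) ⟨hinter_two, by omega⟩ (by omega)
  omega

lemma degreeIn_eq (hvt : VertexTransitive G) (hreg : G.IsRegularOfDegree k)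
    (hA : IsCutAtom G A) (h3 : 3 ≤ #A) (hu : u ∈ A) (hv : v ∈ A) :
    degreeIn G A v = degreeIn G A u := by
  obtain ⟨φ, hφ⟩ := hvt u v
  have hfix : A.map φ.toEquiv.toEmbedding = A :=
    (hA.map_eq_or_disjoint hreg h3 φ).resolve_right
      (not_disjoint_iff.mpr ⟨v, mem_map.mpr ⟨u, hu, hφ⟩, hv⟩)
  rw [← hφ, ← degreeIn_map φ A u, hfix]

end IsCutAtom

lemma two_mul_sub_two_le_cutSize_of_cliqueFree (hconn : G.Connected) (hvt : VertexTransitive G)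
    (hreg : G.IsRegularOfDegree k) (hG : G.CliqueFree 3) (hs : IsAdmissible s) :
    2 * k - 2 ≤ cutSize G s := by
  by_contra! hlt
  obtain ⟨A, hA⟩ := exists_isCutAtom (G := G) ⟨s, hs⟩
  have hcutA : cutSize G A < 2 * k - 2 := (hA.cutSize_le s hs).trans_lt hlt
  have h3 : 3 ≤ #A := hA.three_le_card hreg hcutA
  obtain ⟨v, hv⟩ : A.Nonempty := card_pos.mp (by omega)
  set r := degreeIn G A v
  have hr : k < 2 * r := hA.lt_two_mul_degreeIn hreg h3 hv
  have hcut : cutSize G A = #A * (k - r) :=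
    cutSize_eq_card_mul hreg fun u hu => hA.degreeIn_eq hvt hreg h3 hv hu
  obtain ⟨u, hu, hvu⟩ : ∃ u ∈ A, G.Adj v u := by
    obtain ⟨u, hu⟩ := card_pos.mp (show 0 < degreeIn G A v by omega)
    exact ⟨u, (mem_filter.mp hu).1, (mem_filter.mp hu).2⟩
  have h2r : 2 * r ≤ #A := by
    have := degreeIn_add_degreeIn_le_card (s := A) hG hvu
    rw [hA.degreeIn_eq hvt hreg h3 hv hu] at this
    omega
  rcases lt_or_ge r k with hrk | hrk
  · obtain ⟨a, ha⟩ : ∃ a, r = a + 1 := ⟨r - 1, by omega⟩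
    obtain ⟨b, hb⟩ : ∃ b, k - r = b + 1 := ⟨k - r - 1, by omega⟩
    have hprod : 2 * r * (k - r) ≤ cutSize G A := hcut ▸ Nat.mul_le_mul_right _ h2r
    rw [hb, ha] at hprod
    have : 2 * k - 2 = 2 * a + 2 * b + 2 := by omega
    nlinarith
  · have hAc : Aᶜ.Nonempty := card_pos.mp (by rw [card_compl]; have := hA.isAdmissible.2; omega)
    have := cutSize_pos hconn ⟨v, hv⟩ hAc
    rw [hcut, Nat.sub_eq_zero_of_le hrk, mul_zero] at this
    exact this.false

end VertexTransitiveCut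

open VertexTransitiveCut in
theorem statement2_general {V : Type*} [Fintype V]
    (G : SimpleGraph V) [DecidableRel G.Adj] (k : ℕ)
    (hconn : G.Connected) (hvt : VertexTransitive G) (hreg : G.IsRegularOfDegree k)
    (hg : 3 < G.girth ∨ Fintype.card V < 2 * k)
    (X : Set V) (hX1 : 2 ≤ X.ncard) (hX2 : X.ncard ≤ Fintype.card V - 2) :
    2 * k - 2 ≤ (edgeBoundary G X).ncard := by
  classical
  rw [← X.coe_toFinset, ncard_edgeBoundary_coe]
  rw [← X.coe_toFinset, Set.ncard_coe_finset] at hX1 hX2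
  have hX : IsAdmissible X.toFinset := ⟨hX1, by omega⟩
  rcases hg with hg | hg
  · exact two_mul_sub_two_le_cutSize_of_cliqueFree hconn hvt hreg
      (cliqueFree_three_of_three_lt_girth hg) hX
  · exact two_mul_sub_two_le_cutSize_of_card_lt hreg hg hX

/-- If a connected vertex-transitive `k`-regular graph has girth
greater than 3, or fewer than `2k` vertices, then `d_G(X) ≥ 2k − 2` for every
vertex set `X` with `2 ≤ |X| ≤ |V(G)| − 2`. -/
theorem statement2 {V : Type*} [Fintype V] [DecidableEq V]
    (G : SimpleGraph V) [DecidableRel G.Adj] (k : ℕ)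
    (hconn : G.Connected) (hvt : VertexTransitive G) (hreg : G.IsRegularOfDegree k)
    (hg : 3 < G.girth ∨ Fintype.card V < 2 * k)
    (X : Set V) (hX1 : 2 ≤ X.ncard) (hX2 : X.ncard ≤ Fintype.card V - 2) :
    2 * k - 2 ≤ (edgeBoundary G X).ncard :=
  statement2_general G k hconn hvt hreg hg X hX1 hX2
end

section
/- Let G be a non-bipartite vertex-transitive k-regular simple graph. If the odd girth of G is at least 5, then the independence number of G satisfies α(G) ≤ |V(G)|/2 − k/4; if the odd girth of G equals 3, then α(G) ≤ |V(G)|/3. -/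
open SimpleGraph

/-!
Let `g = 2m + 1` be the odd girth, realised by an odd cycle `C`, and let `S` be a maximum
independent set. Every automorphic image of `C` is again a closed walk of length `g`, so it meets
`S` in at most `m` vertices; averaging over the automorphism group of the vertex-transitive graph
gives `g α ≤ m n`, which for `g = 3` is the claim. When `g ≥ 5`, every vertex has at most two
neighbours on `C`, since a third one would close an odd closed walk, hence an odd cycle, shorter
than `g`; double counting the edges between `V` and `C` gives `g k ≤ 2 n`, and the two
inequalities combine to `4 α + k ≤ 2 n`.
-/

open Finset

namespace SimpleGraph.Walk

variable {V : Type*} {G : SimpleGraph V}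

theorem exists_append_closed_of_not_isPath {u v : V} (p : G.Walk u v) (hp : ¬ p.IsPath) :
    ∃ (w : V) (a : G.Walk u w) (b : G.Walk w w) (c : G.Walk w v),
      0 < b.length ∧ p.length = a.length + b.length + c.length := by
  induction p with
  | nil => exact absurd IsPath.nil hp
  | @cons u x v h q ih =>
    by_cases hq : q.IsPath
    · have hu : u ∈ q.support := by simpa [cons_isPath_iff, hq] using hp
      obtain ⟨a, c, rfl⟩ := mem_support_iff_exists_append.mp hu
      exact ⟨u, nil, cons h a, c, by simp, by simp; omega⟩
    · obtain ⟨w, a, b, c, hb, hlen⟩ := ih hq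
      exact ⟨w, cons h a, b, c, hb, by simp [hlen]; omega⟩

theorem exists_isCycle_odd_length_le {u : V} (p : G.Walk u u) (hp : Odd p.length) :
    ∃ (v : V) (c : G.Walk v v), c.IsCycle ∧ Odd c.length ∧ c.length ≤ p.length := by
  induction hn : p.length using Nat.strong_induction_on generalizing u with
  | _ n ih =>
  cases p with
  | nil => simp at hp
  | @cons _ x _ h q =>
    by_cases hq : q.IsPath
    · refine ⟨u, cons h q, ?_, hp, hn.le⟩
      have hq0 : q.length ≠ 0 := fun h0 => h.ne (eq_of_length_eq_zero h0).symm
      rw [isCycle_iff_isPath_tail_and_le_length]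
      refine ⟨by simpa using hq, ?_⟩
      rw [length_cons] at hp ⊢
      obtain ⟨m, hm⟩ := hp
      omega
    · obtain ⟨w, a, b, c, hb, hlen⟩ := exists_append_closed_of_not_isPath q hq
      -- `p` splits into the closed walks `b` and `cons h (a.append c)`, one of which is odd
      have hsum : b.length + (cons h (a.append c)).length = n := by
        simp only [← hn, length_cons, length_append, hlen]; ring
      have hrest : (cons h (a.append c)).length ≠ 0 := by simp
      rw [hn, ← hsum] at hp
      rcases Nat.even_or_odd b.length with hbe | hbo
      · obtain ⟨v, c', hc', hodd, hle⟩ :=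
          ih _ (by omega) (cons h (a.append c)) ((Nat.odd_add'.mp hp).mpr hbe) rfl
        exact ⟨v, c', hc', hodd, by omega⟩
      · obtain ⟨v, c', hc', hodd, hle⟩ := ih _ (by omega) b hbo rfl
        exact ⟨v, c', hc', hodd, by omega⟩

end SimpleGraph.Walk

section OddGirth

variable {V : Type*} {G : SimpleGraph V}

theorem oddGirth_le_length {u : V} (p : G.Walk u u) (hp : Odd p.length) :
    oddGirth G ≤ p.length := by
  obtain ⟨v, c, hc, hodd, hle⟩ := p.exists_isCycle_odd_length_le hp
  refine le_trans (Nat.sInf_le ?_) hle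
  exact ⟨hodd, v, c, hc, rfl⟩

theorem oddGirth_mem (h : oddGirth G ≠ 0) :
    oddGirth G ∈ {n | Odd n ∧ ∃ (v : V) (c : G.Walk v v), c.IsCycle ∧ c.length = n} :=
  Nat.sInf_mem (Nat.nonempty_of_pos_sInf (Nat.pos_of_ne_zero h))

end OddGirth

namespace SimpleGraph

variable {V : Type*} {G : SimpleGraph V}

theorem Walk.exists_adj_add_one_of_length_eq {g : ℕ} [NeZero g] {u : V} (p : G.Walk u u)
    (hp : p.length = g) : ∃ f : ZMod g → V, ∀ i, G.Adj (f i) (f (i + 1)) := by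
  refine ⟨fun i => p.getVert i.val, fun i => ?_⟩
  have hi : i.val < p.length := hp ▸ i.val_lt
  have hsucc : (i + 1).val = (i.val + 1) % g := by
    rw [← ZMod.val_natCast, Nat.cast_add, ZMod.natCast_zmod_val, Nat.cast_one]
  show G.Adj (p.getVert i.val) (p.getVert (i + 1).val)
  rcases (show i.val + 1 < g ∨ i.val + 1 = g by omega) with hlt | heq
  · rw [hsucc, Nat.mod_eq_of_lt hlt]
    exact p.adj_getVert_succ hi
  · rw [hsucc, heq, Nat.mod_self, getVert_zero]
    simpa [heq, ← hp] using p.adj_getVert_succ hi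

/- A closed walk of length `g` is handled as a map `f : ZMod g → V` with `f i` adjacent to
`f (i + 1)`; it need not be injective. -/
section Cyclic

variable {g : ℕ} [NeZero g] {f : ZMod g → V}

theorem exists_walk_length_eq_val_sub (hf : ∀ i, G.Adj (f i) (f (i + 1))) (i j : ZMod g) :
    ∃ p : G.Walk (f i) (f j), p.length = (j - i).val := by
  suffices h : ∀ d : ℕ, ∃ p : G.Walk (f i) (f (i + d)), p.length = d by
    obtain ⟨p, hp⟩ := h (j - i).val
    exact ⟨p.copy rfl (by simp), by simpa using hp⟩
  intro d
  induction d with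
  | zero => exact ⟨Walk.nil.copy rfl (by simp), by simp⟩
  | succ d ih =>
    obtain ⟨p, hp⟩ := ih
    exact ⟨(p.concat (hf _)).copy rfl (by push_cast; ring_nf), by simp [hp]⟩

theorem two_mul_card_filter_mem_le [DecidableEq V] (hf : ∀ i, G.Adj (f i) (f (i + 1)))
    {S : Finset V} (hS : IsIndependentSet G S) : 2 * #{i | f i ∈ S} ≤ g := by
  set I : Finset (ZMod g) := {i | f i ∈ S}
  have hdisj : Disjoint I (I.map (addRightEmbedding 1)) := by
    refine Finset.disjoint_left.mpr fun j hj hj' => ?_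
    obtain ⟨i, hi, rfl⟩ := mem_map.mp hj'
    exact hS _ (mem_filter.mp hi).2 _ (mem_filter.mp hj).2 (hf i)
  have := card_le_univ (I ∪ I.map (addRightEmbedding 1))
  rw [card_union_of_disjoint hdisj, card_map, ZMod.card] at this
  omega

section ShortestOddWalk

variable (hf : ∀ i, G.Adj (f i) (f (i + 1))) (hodd : Odd g)
  (hshort : ∀ (u : V) (p : G.Walk u u), Odd p.length → g ≤ p.length)
include hf hodd hshort

/- The arc from `f i` to `f j`, closed up through `w`, is an odd closed walk of length
`(j - i).val + 2`; so the complementary arc has even length at most `2`. -/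
theorem val_sub_eq_two_of_odd_val_sub {w : V} {i j : ZMod g} (hi : G.Adj w (f i))
    (hj : G.Adj w (f j)) (hij : Odd (j - i).val) : (i - j).val = 2 := by
  obtain ⟨p, hp⟩ := exists_walk_length_eq_val_sub hf i j
  have hlong := hshort _ (p.append (.cons hj.symm (.cons hi .nil)))
    (by simpa [hp] using hij.add_even even_two)
  have hne : j - i ≠ 0 := by rintro h; simp [h] at hij
  rw [show i - j = -(j - i) by ring, ZMod.neg_val, if_neg hne]
  have := (j - i).val_lt
  simp only [Walk.length_append, Walk.length_cons, Walk.length_nil, hp] at hlong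
  obtain ⟨a, ha⟩ := hodd
  obtain ⟨b, hb⟩ := hij
  omega

theorem sub_eq_two_or_sub_eq_neg_two {w : V} {i j : ZMod g} (hi : G.Adj w (f i))
    (hj : G.Adj w (f j)) (hij : i ≠ j) : j - i = 2 ∨ j - i = -2 := by
  have hsum : (j - i).val + (i - j).val = g := by
    rw [show i - j = -(j - i) by ring, ZMod.neg_val, if_neg (sub_ne_zero.mpr hij.symm)]
    have := (j - i).val_lt
    omega
  have hval : ∀ x : ZMod g, x.val = 2 → x = 2 := fun x hx => by
    rw [← ZMod.natCast_zmod_val x, hx, Nat.cast_ofNat]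
  rcases Nat.even_or_odd (j - i).val with he | ho
  · left
    refine hval _ (val_sub_eq_two_of_odd_val_sub hf hodd hshort hj hi ?_)
    rw [← hsum] at hodd
    exact (Nat.odd_add'.mp hodd).mpr he
  · right
    rw [← neg_sub, neg_inj]
    exact hval _ (val_sub_eq_two_of_odd_val_sub hf hodd hshort hi hj ho)

/- Three neighbours would pairwise differ by `±2`, and the three differences sum to `0`, which
forces `2 = 0` or `6 = 0` in `ZMod g`. -/
theorem card_filter_adj_le_two [DecidableRel G.Adj] (h5 : 5 ≤ g) (w : V) :
    #{i | G.Adj w (f i)} ≤ 2 := by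
  by_contra! h
  obtain ⟨i, hi, j, hj, l, hl, hij, hil, hjl⟩ := two_lt_card.mp h
  simp only [mem_filter, mem_univ, true_and] at hi hj hl
  have hne : ∀ n : ℕ, ¬ g ∣ n → (n : ZMod g) ≠ 0 := fun n hn h =>
    hn ((ZMod.natCast_eq_zero_iff n g).mp h)
  have h2 : (2 : ZMod g) ≠ 0 := by
    have hd : ¬ g ∣ 2 := fun hd => by have := Nat.le_of_dvd two_pos hd; omega
    exact_mod_cast hne 2 hd
  have h6 : (6 : ZMod g) ≠ 0 := by
    have hd : ¬ g ∣ 6 := fun hd => by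
      have := Nat.le_of_dvd (by norm_num) hd
      interval_cases g <;> revert hodd hd <;> decide
    exact_mod_cast hne 6 hd
  rcases sub_eq_two_or_sub_eq_neg_two hf hodd hshort hi hj hij with h₁ | h₁ <;>
  rcases sub_eq_two_or_sub_eq_neg_two hf hodd hshort hj hl hjl with h₂ | h₂ <;>
  rcases sub_eq_two_or_sub_eq_neg_two hf hodd hshort hl hi hil.symm with h₃ | h₃ <;>
  first
    | exact h2 (by linear_combination h₁ + h₂ + h₃)
    | exact h2 (by linear_combination -(h₁ + h₂ + h₃))
    | exact h6 (by linear_combination h₁ + h₂ + h₃)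
    | exact h6 (by linear_combination -(h₁ + h₂ + h₃))

end ShortestOddWalk

end Cyclic

theorem IsRegularOfDegree.card_mul_le [Fintype V] [DecidableRel G.Adj] {k : ℕ}
    (hreg : G.IsRegularOfDegree k) {ι : Type*} [Fintype ι] (f : ι → V) {c : ℕ}
    (hc : ∀ w, #{i | G.Adj w (f i)} ≤ c) : Fintype.card ι * k ≤ c * Fintype.card V := by
  have hdeg : ∀ i, #{w | G.Adj (f i) w} = k := fun i => by
    rw [← hreg (f i), ← card_neighborFinset_eq_degree, neighborFinset_eq_filter]
  calc Fintype.card ι * k = ∑ i, #{w | G.Adj (f i) w} := by simp [hdeg]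
    _ = ∑ w, #{i | G.Adj w (f i)} := by
      simp_rw [G.adj_comm _ (f _)]
      exact sum_card_bipartiteAbove_eq_sum_card_bipartiteBelow _
    _ ≤ ∑ _w : V, c := sum_le_sum fun w _ => hc w
    _ = c * Fintype.card V := by simp [mul_comm]

end SimpleGraph

namespace VertexTransitive

variable {V : Type*} {G : SimpleGraph V} [Fintype V] [DecidableEq V]

theorem card_mul_card_filter_apply_eq [Fintype (G ≃g G)] (hvt : VertexTransitive G)
    (x y : V) : Fintype.card V * #{φ : G ≃g G | φ x = y} = Fintype.card (G ≃g G) := by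
  have hconst : ∀ z, #{φ : G ≃g G | φ x = z} = #{φ : G ≃g G | φ x = y} := fun z => by
    obtain ⟨ψ, hψ⟩ := hvt z y
    refine card_bij' (fun φ _ => ψ * φ) (fun φ _ => ψ⁻¹ * φ) ?_ ?_ ?_ ?_ <;>
      simp_all [RelIso.mul_apply, ← hψ]
  calc Fintype.card V * #{φ : G ≃g G | φ x = y} = ∑ z, #{φ : G ≃g G | φ x = z} := by
        simp [hconst]
    _ = Fintype.card (G ≃g G) := by simp [sum_card_fiberwise_eq_card_filter]

theorem card_mul_card_le (hvt : VertexTransitive G) {ι : Type*} [Fintype ι] (f : ι → V)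
    (S : Finset V) {b : ℕ} (hb : ∀ φ : G ≃g G, #{i | φ (f i) ∈ S} ≤ b) :
    Fintype.card ι * #S ≤ Fintype.card V * b := by
  have : Finite (G ≃g G) := .of_injective _ RelIso.toEquiv_injective
  have := Fintype.ofFinite (G ≃g G)
  have hfiber : ∀ x, Fintype.card V * #{φ : G ≃g G | φ x ∈ S} = #S * Fintype.card (G ≃g G) :=
    fun x => by
      rw [← sum_card_fiberwise_eq_card_filter, mul_sum]
      simp [hvt.card_mul_card_filter_apply_eq]
  refine Nat.le_of_mul_le_mul_right ?_ (Fintype.card_pos (α := G ≃g G))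
  calc Fintype.card ι * #S * Fintype.card (G ≃g G)
      = Fintype.card V * ∑ i, #{φ : G ≃g G | φ (f i) ∈ S} := by
        simp [mul_sum, hfiber, mul_assoc]
    _ = Fintype.card V * ∑ φ : G ≃g G, #{i | φ (f i) ∈ S} := by
        congr 1
        exact (sum_card_bipartiteAbove_eq_sum_card_bipartiteBelow _).symm
    _ ≤ Fintype.card V * ∑ _φ : G ≃g G, b := by gcongr with φ; exact hb φ
    _ = Fintype.card V * b * Fintype.card (G ≃g G) := by simp [mul_comm, mul_left_comm]

end VertexTransitive

theorem exists_isIndependentSet_card_eq_indepNum {V : Type*} [Fintype V] (G : SimpleGraph V) :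
    ∃ S : Finset V, IsIndependentSet G S ∧ #S = _root_.indepNum G := by
  classical
  have hne : {n | ∃ X : Set V, IsIndependentSet G X ∧ X.ncard = n}.Nonempty :=
    ⟨0, ∅, by simp [IsIndependentSet]⟩
  have hbdd : BddAbove {n | ∃ X : Set V, IsIndependentSet G X ∧ X.ncard = n} :=
    ⟨Fintype.card V, by rintro _ ⟨X, -, rfl⟩; simpa using Set.ncard_le_card X⟩
  obtain ⟨X, hX, hcard⟩ := Nat.sSup_mem hne hbdd
  exact ⟨X.toFinset, by simpa using hX, by rw [← Set.ncard_eq_toFinset_card', hcard]; rfl⟩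

theorem VertexTransitive.mul_indepNum_le {V : Type*} [Fintype V] [DecidableEq V]
    {G : SimpleGraph V} (hvt : VertexTransitive G) {m : ℕ} (hg : oddGirth G = 2 * m + 1) :
    (2 * m + 1) * _root_.indepNum G ≤ Fintype.card V * m := by
  obtain ⟨-, v, c, -, hc⟩ := oddGirth_mem (G := G) (by omega)
  obtain ⟨f, hf⟩ := c.exists_adj_add_one_of_length_eq (hc.trans hg)
  obtain ⟨S, hS, hcard⟩ := exists_isIndependentSet_card_eq_indepNum G
  have := hvt.card_mul_card_le f S (b := m) fun φ => by
    have := two_mul_card_filter_mem_le (fun i => φ.map_adj_iff.mpr (hf i)) hS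
    omega
  simpa [hcard, ZMod.card] using this

theorem oddGirth_mul_le_two_mul_card {V : Type*} [Fintype V] {G : SimpleGraph V}
    [DecidableRel G.Adj] {k : ℕ} (hreg : G.IsRegularOfDegree k) (h5 : 5 ≤ oddGirth G) :
    oddGirth G * k ≤ 2 * Fintype.card V := by
  obtain ⟨hodd, v, c, -, hc⟩ := oddGirth_mem (G := G) (by omega)
  have : NeZero (oddGirth G) := ⟨by omega⟩
  obtain ⟨f, hf⟩ := c.exists_adj_add_one_of_length_eq hc
  simpa [ZMod.card] using hreg.card_mul_le f
    (card_filter_adj_le_two hf hodd (fun _ p hp => oddGirth_le_length p hp) h5)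

theorem statement3_general {V : Type*} [Fintype V] [DecidableEq V]
    (G : SimpleGraph V) [DecidableRel G.Adj] (k : ℕ)
    (hvt : VertexTransitive G)
    (hreg : G.IsRegularOfDegree k) :
    (5 ≤ oddGirth G → (_root_.indepNum G : ℚ) ≤ (Fintype.card V : ℚ) / 2 - (k : ℚ) / 4) ∧
    (oddGirth G = 3 → (_root_.indepNum G : ℚ) ≤ (Fintype.card V : ℚ) / 3) := by
  constructor
  · intro h5
    obtain ⟨m, hm⟩ := (oddGirth_mem (G := G) (by omega)).1
    have hα := hvt.mul_indepNum_le hm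
    have hk := oddGirth_mul_le_two_mul_card hreg h5
    rw [hm] at hk
    have hmul :
        (2 * m + 1) * (4 * _root_.indepNum G + k) ≤ (2 * m + 1) * (2 * Fintype.card V) := by
      nlinarith
    have : (4 * _root_.indepNum G + k : ℚ) ≤ 2 * Fintype.card V := by
      exact_mod_cast Nat.le_of_mul_le_mul_left hmul (by omega)
    linarith
  · intro h3
    have : 3 * _root_.indepNum G ≤ Fintype.card V := by
      simpa using hvt.mul_indepNum_le (m := 1) h3
    have : (3 * _root_.indepNum G : ℚ) ≤ Fintype.card V := by exact_mod_cast this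
    linarith

/-- For a non-bipartite vertex-transitive `k`-regular graph `G`:
if the odd girth is at least 5 then `α(G) ≤ |V(G)|/2 − k/4`; if the odd girth
equals 3 then `α(G) ≤ |V(G)|/3`. -/
theorem statement3 {V : Type*} [Fintype V] [DecidableEq V]
    (G : SimpleGraph V) [DecidableRel G.Adj] (k : ℕ)
    (hvt : VertexTransitive G) (hnb : ¬ G.Colorable 2)
    (hreg : G.IsRegularOfDegree k) :
    (5 ≤ oddGirth G → (_root_.indepNum G : ℚ) ≤ (Fintype.card V : ℚ) / 2 - (k : ℚ) / 4) ∧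
    (oddGirth G = 3 → (_root_.indepNum G : ℚ) ≤ (Fintype.card V : ℚ) / 3) :=
  statement3_general G k hvt hreg
end

section
/- Let G be a connected non-bipartite vertex-transitive simple graph and let X be an independent set of vertices of G. Suppose that the graph G − X (the subgraph induced on V(G) \ X) has exactly |X| − t components consisting of a single vertex, where t is a positive integer. Then the odd girth g₀ of G satisfies g₀ ≥ 2|X|/t + 1. -/
/-!
Let `g` be the odd girth, realised by a cycle `C`, and let `T` be the set of vertices forming
trivial components of `G − X`: every neighbour of a vertex of `T` lies in `X`, and
`|T| = |X| − t`. Read `C` as a cyclic sequence indexed by `ℤ/g`. The positions in `X` are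
pairwise non-consecutive, so there are at most `(g − 1)/2` of them, and each position in `T`
lies between two positions in `X`; if `T` is visited at all it is visited strictly fewer times
than `X`. This gives `(g − 1)·#(T-positions) ≤ (g − 3)·#(X-positions)` for every image of
`C` under an automorphism. Summed over the automorphism group, which by vertex-transitivity puts
every position on every vertex equally often, it becomes `(g − 1)|T| ≤ (g − 3)|X|`, that is,
`2|X| ≤ (g − 1)t`.
-/

open SimpleGraph

open Finset

namespace SimpleGraph

variable {V : Type*} {G : SimpleGraph V}

instance [Finite V] : Finite (G ≃g G) := Finite.of_injective _ RelIso.toEquiv_injective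

lemma supp_connectedComponentMk_eq_singleton {v : V} (hv : ∀ w, ¬ G.Adj v w) :
    (G.connectedComponentMk v).supp = {v} := by
  ext w
  simp only [ConnectedComponent.mem_supp_iff, ConnectedComponent.eq, Set.mem_singleton_iff]
  refine ⟨fun hwv ↦ ?_, fun h ↦ h ▸ Reachable.refl w⟩
  obtain ⟨p⟩ := hwv.symm
  cases p with
  | nil => rfl
  | cons h _ => exact absurd h (hv _)

lemma ncard_supp_connectedComponentMk_eq_one_iff {v : V} :
    (G.connectedComponentMk v).supp.ncard = 1 ↔ ∀ w, ¬ G.Adj v w := by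
  refine ⟨fun h w hvw ↦ ?_, fun hv ↦ ?_⟩
  · obtain ⟨a, ha⟩ := Set.ncard_eq_one.1 h
    have hv : v ∈ (G.connectedComponentMk v).supp := rfl
    have hw : w ∈ (G.connectedComponentMk v).supp := ConnectedComponent.sound hvw.reachable.symm
    rw [ha, Set.mem_singleton_iff] at hv hw
    exact hvw.ne (hv.trans hw.symm)
  · rw [supp_connectedComponentMk_eq_singleton hv, Set.ncard_singleton]

namespace Walk

lemma exists_loop_of_not_isPath [DecidableEq V] {a b : V} (p : G.Walk a b) (hp : ¬ p.IsPath) :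
    ∃ (x : V) (c : G.Walk x x) (q : G.Walk a b), c.length ≠ 0 ∧ c.length + q.length = p.length := by
  induction p with
  | nil => exact absurd IsPath.nil hp
  | @cons a a' b h p ih =>
    rw [cons_isPath_iff, not_and_or, not_not] at hp
    rcases hp with hp | ha
    · obtain ⟨x, c, q, hc, hlen⟩ := ih hp
      exact ⟨x, c, cons h q, hc, by simp only [length_cons]; omega⟩
    · refine ⟨a, cons h (p.takeUntil a ha), p.dropUntil a ha, by simp, ?_⟩
      have := congrArg length (p.take_spec ha)
      simp only [length_append] at this
      simp only [length_cons]
      omega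

lemma exists_isCycle_odd_length {u : V} (w : G.Walk u u) (hw : Odd w.length) :
    ∃ (v : V) (c : G.Walk v v), c.IsCycle ∧ Odd c.length := by
  classical
  induction hn : w.length using Nat.strong_induction_on generalizing u with | _ n ih =>
  cases w with
  | nil => simp at hw
  | @cons _ y _ h p =>
    by_cases hp : p.IsPath
    · refine ⟨u, cons h p, isCycle_iff_isPath_tail_and_le_length.2 ⟨by simpa using hp, ?_⟩, hw⟩
      have : p.length ≠ 0 := fun h0 ↦ by
        cases p with
        | nil => exact G.loopless.irrefl _ h
        | cons => simp at h0
      rw [length_cons] at hw ⊢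
      obtain ⟨k, hk⟩ := hw
      omega
    · obtain ⟨x, c, q, hc, hlen⟩ := exists_loop_of_not_isPath p hp
      rw [length_cons, ← hlen] at hw hn
      rcases Nat.even_or_odd c.length with ⟨k, hk⟩ | hc_odd
      · refine ih _ (by rw [length_cons]; omega) (cons h q) ?_ rfl
        obtain ⟨m, hm⟩ := hw
        exact ⟨m - k, by simp only [length_cons]; omega⟩
      · exact ih _ (by omega) c hc_odd rfl

lemma adj_getVert_val_zmod {u : V} {L : ℕ} [NeZero L] (w : G.Walk u u) (hw : w.length = L)
    (i : ZMod L) : G.Adj (w.getVert i.val) (w.getVert (i + 1).val) := by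
  have hi := i.val_lt
  have hval : (i + 1).val = (i.val + 1) % L := by
    rw [ZMod.val_add, ZMod.val_one_eq_one_mod, Nat.add_mod_mod]
  rw [hval]
  have hadj := w.adj_getVert_succ (i := i.val) (by omega)
  rcases (Nat.succ_le_of_lt hi).lt_or_eq with hlt | hlast
  · rwa [Nat.mod_eq_of_lt hlt]
  · rw [show i.val + 1 = L by omega, Nat.mod_self, getVert_zero]
    rwa [show i.val + 1 = w.length by omega, getVert_length] at hadj

end Walk

lemma oddGirth_spec (hG : ¬ G.Colorable 2) :
    Odd (oddGirth G) ∧ ∃ (v : V) (c : G.Walk v v), c.IsCycle ∧ c.length = oddGirth G := by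
  obtain ⟨u, w, hw⟩ : ∃ (u : V) (w : G.Walk u u), Odd w.length := by
    simpa [two_colorable_iff_forall_loop_even] using hG
  obtain ⟨v, c, hc, hodd⟩ := w.exists_isCycle_odd_length hw
  have hne : {n | Odd n ∧ ∃ (v : V) (c : G.Walk v v), c.IsCycle ∧ c.length = n}.Nonempty :=
    ⟨c.length, hodd, v, c, hc, rfl⟩
  exact Nat.sInf_mem hne

end SimpleGraph

namespace ZMod

variable {L : ℕ}

lemma two_mul_card_le_of_forall_add_one_notMem [NeZero L] (hL : Odd L) (A : Finset (ZMod L))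
    (hA : ∀ i ∈ A, i + 1 ∉ A) : 2 * #A ≤ L - 1 := by
  have hdisj : Disjoint A (A.image (· + 1)) := by
    simp only [Finset.disjoint_left, mem_image, not_exists, not_and]
    rintro _ hi j hj rfl
    exact hA j hj hi
  have := card_le_univ (A ∪ A.image (· + 1))
  rw [card_union_of_disjoint hdisj, card_image_of_injective _ (add_left_injective 1),
    ZMod.card] at this
  obtain ⟨k, rfl⟩ := hL
  omega

lemma card_lt_card_of_forall_add_one_mem (hL : Odd L) {A B : Finset (ZMod L)} (hAB : Disjoint A B)
    (hB : ∀ i ∈ B, i + 1 ∈ A ∧ i - 1 ∈ A) (hBne : B.Nonempty) : #B < #A := by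
  have hsucc : B.image (· + 1) ⊆ A := by
    simp only [subset_iff, mem_image]
    rintro _ ⟨i, hi, rfl⟩
    exact (hB i hi).1
  have hpred : B.image (· - 1) ⊆ A := by
    simp only [subset_iff, mem_image]
    rintro _ ⟨i, hi, rfl⟩
    exact (hB i hi).2
  have hle := card_le_card hsucc
  rw [card_image_of_injective _ (add_left_injective 1)] at hle
  refine hle.lt_of_ne fun hcard ↦ ?_
  -- then `A = B - 1`, so `B + 2 ⊆ B`, and `2` generates `ZMod L` since `L` is odd
  have hA : A = B.image (· - 1) := (eq_of_subset_of_card_le hpred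
    (by rw [card_image_of_injective _ sub_left_injective, hcard])).symm
  have hstep : ∀ i ∈ B, i + 2 ∈ B := by
    intro i hi
    obtain ⟨j, hj, hji⟩ := mem_image.1 (hA ▸ (hB i hi).1)
    rwa [show i + 2 = j by linear_combination -hji]
  obtain ⟨b, hb⟩ := hBne
  have hiter : ∀ k : ℕ, b + 2 * k ∈ B := by
    intro k
    induction k with
    | zero => simpa using hb
    | succ k ih => simpa [mul_add, ← add_assoc] using hstep _ ih
  have hL1 : ((2 * ((L + 1) / 2) : ℕ) : ZMod L) = 1 := by
    rw [Nat.two_mul_div_two_of_even hL.add_one, Nat.cast_add, ZMod.natCast_self, zero_add,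
      Nat.cast_one]
  have := hiter ((L + 1) / 2)
  rw [← Nat.cast_ofNat, ← Nat.cast_mul, hL1] at this
  exact Finset.disjoint_left.1 hAB (hB b hb).1 this

lemma sub_one_mul_card_le_sub_three_mul_card [NeZero L] (hL : Odd L) {A B : Finset (ZMod L)}
    (hA : ∀ i ∈ A, i + 1 ∉ A) (hAB : Disjoint A B) (hB : ∀ i ∈ B, i + 1 ∈ A ∧ i - 1 ∈ A) :
    (L - 1) * #B ≤ (L - 3) * #A := by
  rcases B.eq_empty_or_nonempty with rfl | hBne
  · simp
  have hA2 := two_mul_card_le_of_forall_add_one_notMem hL A hA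
  have hBA := card_lt_card_of_forall_add_one_mem hL hAB hB hBne
  obtain ⟨c, rfl⟩ : ∃ c, L = c + 3 := ⟨L - 3, by omega⟩
  simp only [Nat.add_sub_cancel, show c + 3 - 1 = c + 2 by omega] at hA2 ⊢
  nlinarith

end ZMod

namespace VertexTransitive

variable {V : Type*} {G : SimpleGraph V} [DecidableEq V] [Fintype (G ≃g G)]

lemma card_filter_apply_eq (hvt : VertexTransitive G) (w x y : V) :
    #{φ : G ≃g G | φ w = x} = #{φ : G ≃g G | φ w = y} := by
  obtain ⟨ψ, rfl⟩ := hvt x y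
  refine card_nbij' (ψ * ·) (ψ⁻¹ * ·) ?_ ?_ ?_ ?_ <;> intro φ <;> simp_all [RelIso.mul_apply]

lemma card_filter_apply_mem_mul_card [Fintype V] (hvt : VertexTransitive G) (w : V)
    (S : Finset V) : #{φ : G ≃g G | φ w ∈ S} * Fintype.card V = #S * Fintype.card (G ≃g G) := by
  have hfiber (T : Finset V) : #{φ : G ≃g G | φ w ∈ T} = #T * #{φ : G ≃g G | φ w = w} := by
    rw [card_eq_sum_card_fiberwise (s := {φ : G ≃g G | φ w ∈ T}) (t := T) (f := fun φ ↦ φ w)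
      fun φ hφ ↦ (mem_filter.1 hφ).2, ← smul_eq_mul, ← sum_const]
    refine sum_congr rfl fun x hx ↦ ?_
    rw [filter_filter, ← hvt.card_filter_apply_eq w x w]
    congr 1
    exact filter_congr fun φ _ ↦ ⟨And.right, fun h ↦ ⟨h ▸ hx, h⟩⟩
  have hV := hfiber univ
  rw [filter_true_of_mem fun φ _ ↦ mem_univ _, card_univ, card_univ] at hV
  rw [hfiber, hV]
  ring

lemma sum_card_filter_apply_mem_mul_card [Fintype V] (hvt : VertexTransitive G) {ι : Type*}
    [Fintype ι] (f : ι → V) (S : Finset V) :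
    (∑ φ : G ≃g G, #{i | φ (f i) ∈ S}) * Fintype.card V =
      Fintype.card ι * (#S * Fintype.card (G ≃g G)) := by
  simp only [card_filter]
  rw [sum_comm, sum_mul]
  simp only [← card_filter, hvt.card_filter_apply_mem_mul_card, sum_const, card_univ, smul_eq_mul]

lemma mul_card_le_mul_card_of_forall_aut [Fintype V] (hvt : VertexTransitive G) {ι : Type*}
    [Fintype ι] [Nonempty ι] (f : ι → V) (S S' : Finset V) (a b : ℕ)
    (h : ∀ φ : G ≃g G, a * #{i | φ (f i) ∈ S} ≤ b * #{i | φ (f i) ∈ S'}) :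
    a * #S ≤ b * #S' := by
  have hsum := Nat.mul_le_mul_right (Fintype.card V) (sum_le_sum fun φ (_ : φ ∈ univ) ↦ h φ)
  rw [← mul_sum, ← mul_sum, mul_assoc, mul_assoc, hvt.sum_card_filter_apply_mem_mul_card,
    hvt.sum_card_filter_apply_mem_mul_card] at hsum
  refine Nat.le_of_mul_le_mul_right ?_ (by positivity : 0 < Fintype.card ι * Fintype.card (G ≃g G))
  calc a * #S * (Fintype.card ι * Fintype.card (G ≃g G))
      = a * (Fintype.card ι * (#S * Fintype.card (G ≃g G))) := by ring
    _ ≤ b * (Fintype.card ι * (#S' * Fintype.card (G ≃g G))) := hsum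
    _ = b * #S' * (Fintype.card ι * Fintype.card (G ≃g G)) := by ring

end VertexTransitive

def trivialComponentVerts {V : Type*} (G : SimpleGraph V) (X : Set V) : Set V :=
  {v | v ∉ X ∧ ∀ w, G.Adj v w → w ∈ X}

lemma trivialComponentCount_eq_ncard {V : Type*} (G : SimpleGraph V) (X : Set V) :
    trivialComponentCount G X = (trivialComponentVerts G X).ncard := by
  symm
  refine Set.ncard_congr (fun v hv ↦ (G.induce Xᶜ).connectedComponentMk ⟨v, hv.1⟩) ?_ ?_ ?_
  · rintro v ⟨hvX, hv⟩
    exact ncard_supp_connectedComponentMk_eq_one_iff.2 fun w hvw ↦ w.2 (hv w hvw)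
  · rintro v v' ⟨hvX, hv⟩ _ h
    have : (⟨v', _⟩ : ↥Xᶜ) ∈ ((G.induce Xᶜ).connectedComponentMk ⟨v, hvX⟩).supp := h.symm
    rw [supp_connectedComponentMk_eq_singleton fun w hvw ↦ w.2 (hv w hvw)] at this
    exact congrArg Subtype.val this.symm
  · intro c hc
    induction c using ConnectedComponent.ind with | h v => ?_
    have hv := ncard_supp_connectedComponentMk_eq_one_iff.1 hc
    exact ⟨v, ⟨v.2, fun w hvw ↦ not_not.1 fun hw ↦ hv ⟨w, hw⟩ hvw⟩, rfl⟩

lemma mul_ncard_trivialComponentVerts_le {V : Type*} [Fintype V] {G : SimpleGraph V}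
    (hvt : VertexTransitive G) {X : Set V} (hX : IsIndependentSet G X) {u : V} (c : G.Walk u u)
    (hc : Odd c.length) :
    (c.length - 1) * (trivialComponentVerts G X).ncard ≤ (c.length - 3) * X.ncard := by
  classical
  have : NeZero c.length := ⟨hc.pos.ne'⟩
  have := Fintype.ofFinite (G ≃g G)
  rw [Set.ncard_eq_toFinset_card', Set.ncard_eq_toFinset_card']
  refine hvt.mul_card_le_mul_card_of_forall_aut (fun i : ZMod c.length ↦ c.getVert i.val) _ _ _ _
    fun φ ↦ ?_
  have hadj (i : ZMod c.length) : G.Adj (φ (c.getVert i.val)) (φ (c.getVert (i + 1).val)) :=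
    φ.map_adj_iff.2 (c.adj_getVert_val_zmod rfl i)
  refine ZMod.sub_one_mul_card_le_sub_three_mul_card hc ?_ ?_ ?_ <;>
    simp only [mem_filter, mem_univ, true_and, Set.mem_toFinset]
  · exact fun i hi hi' ↦ hX _ hi _ hi' (hadj i)
  · exact disjoint_filter.2 fun i _ hiX hiT ↦ hiT.1 hiX
  · exact fun i hi ↦ ⟨hi.2 _ (hadj i), hi.2 _ (by simpa using (hadj (i - 1)).symm)⟩

theorem statement4_general {V : Type*} [Fintype V]
    (G : SimpleGraph V)
    (hvt : VertexTransitive G) (hnb : ¬ G.Colorable 2)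
    (X : Set V) (hX : IsIndependentSet G X)
    (t : ℕ)
    (hcount : trivialComponentCount G X + t = X.ncard) :
    (2 * X.ncard : ℚ) / (t : ℚ) + 1 ≤ (oddGirth G : ℚ) := by
  obtain ⟨hodd, v, c, hc, hlen⟩ := oddGirth_spec hnb
  obtain ⟨g, hg⟩ : ∃ g, oddGirth G = g + 3 :=
    ⟨_, (Nat.sub_add_cancel (hlen ▸ hc.three_le_length)).symm⟩
  have key := mul_ncard_trivialComponentVerts_le hvt hX c (hlen ▸ hodd)
  rw [hlen, hg, ← trivialComponentCount_eq_ncard, ← hcount, Nat.add_sub_cancel,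
    show g + 3 - 1 = g + 2 by omega] at key
  have h2X : 2 * X.ncard ≤ (g + 2) * t := by
    rw [← hcount]
    nlinarith
  have := div_le_of_le_mul₀ (by positivity) (by positivity)
    (by exact_mod_cast h2X : (2 * X.ncard : ℚ) ≤ (g + 2 : ℚ) * t)
  rw [hg, Nat.cast_add]
  linarith

/-- If `X` is an independent set of a connected non-bipartite
vertex-transitive graph `G` and `G − X` has exactly `|X| − t` trivial components
for a positive integer `t`, then the odd girth of `G` is at least `2|X|/t + 1`. -/
theorem statement4 {V : Type*} [Fintype V] [DecidableEq V]
    (G : SimpleGraph V)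
    (hconn : G.Connected) (hvt : VertexTransitive G) (hnb : ¬ G.Colorable 2)
    (X : Set V) (hX : IsIndependentSet G X)
    (t : ℕ) (ht : 0 < t)
    (hcount : trivialComponentCount G X + t = X.ncard) :
    (2 * X.ncard : ℚ) / (t : ℚ) + 1 ≤ (oddGirth G : ℚ) :=
  statement4_general G hvt hnb X hX t hcount
end

section
/- Let G be a vertex-transitive simple graph containing a triangle. Then for every subset X of V(G), the number of trivial components of G − X is at most the number of edges of G with both ends in X. -/
open SimpleGraph

/-!
Let `t` be the number of edges spanned by the neighbourhood of a vertex, i.e. the number of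
triangles through it; it is the same for every vertex by vertex-transitivity and positive
because `G` has a triangle. If `{v}` is a trivial component of `G − X` then `N(v) ⊆ X`, so the
`t` edges spanned by `N(v)` lie in `E(X)`. Conversely an edge `ab` is spanned by `N(v)` only for
common neighbours `v` of `a` and `b`, and `v ↦ vb` injects these into the `t` edges spanned
by `N(a)`. Double counting the pairs (`v`, edge of `E(X)` spanned by `N(v)`) gives
`t · #trivial components ≤ t · |E(X)|`.
-/

section

variable {V W : Type*} {G : SimpleGraph V}

lemma edgesWithin_mono {S T : Set V} (h : S ⊆ T) : edgesWithin G S ⊆ edgesWithin G T :=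
  fun _ he => ⟨he.1, fun v hv => h (he.2 v hv)⟩

lemma image_edgesWithin {G' : SimpleGraph W} (φ : G ≃g G') (S : Set V) :
    Sym2.map φ '' edgesWithin G S = edgesWithin G' (φ '' S) := by
  ext e
  obtain ⟨e, rfl⟩ : ∃ e', Sym2.map φ e' = e :=
    ⟨Sym2.map φ.symm e, by simp [Sym2.map_map]⟩
  rw [(Sym2.map.injective φ.injective).mem_set_image]
  induction e using Sym2.ind with
  | h a b => simp [edgesWithin, φ.map_adj_iff]

lemma SimpleGraph.Iso.ncard_edgesWithin_neighborSet {G' : SimpleGraph W} (φ : G ≃g G') (v : V) :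
    (edgesWithin G' (G'.neighborSet (φ v))).ncard = (edgesWithin G (G.neighborSet v)).ncard := by
  rw [← φ.image_neighborSet, ← image_edgesWithin,
    Set.ncard_image_of_injective _ (Sym2.map.injective φ.injective)]

lemma VertexTransitive.ncard_edgesWithin_neighborSet_eq (hG : VertexTransitive G) (v w : V) :
    (edgesWithin G (G.neighborSet v)).ncard = (edgesWithin G (G.neighborSet w)).ncard := by
  obtain ⟨φ, rfl⟩ := hG v w
  exact (Iso.ncard_edgesWithin_neighborSet φ v).symm

lemma ncard_commonNeighbors_le_ncard_edgesWithin_neighborSet [Finite V] {a b : V}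
    (hab : G.Adj a b) :
    (G.commonNeighbors a b).ncard ≤ (edgesWithin G (G.neighborSet a)).ncard := by
  refine Set.ncard_le_ncard_of_injOn (fun v => s(v, b)) ?_ ?_
  · rintro v ⟨hav, hbv⟩
    refine ⟨(G.adj_symm hbv : G.Adj v b), fun w hw => ?_⟩
    rcases Sym2.mem_iff.mp hw with rfl | rfl
    exacts [hav, hab]
  · intro v _ w _ h
    exact Sym2.congr_left.mp h

lemma trivialComponentCount_le_ncard_setOf_neighborSet_subset [Finite V] (X : Set V) :
    trivialComponentCount G X ≤ {v | v ∉ X ∧ G.neighborSet v ⊆ X}.ncard := by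
  have hsub : {c : (G.induce Xᶜ).ConnectedComponent | c.supp.ncard = 1} ⊆
      (G.induce Xᶜ).connectedComponentMk '' {w | G.neighborSet w ⊆ X} := by
    intro c hc
    obtain ⟨w, hw⟩ := Set.ncard_eq_one.mp hc
    have hwc : (G.induce Xᶜ).connectedComponentMk w = c := by
      rw [← ConnectedComponent.mem_supp_iff, hw]; rfl
    refine ⟨w, fun u hu => ?_, hwc⟩
    by_contra huX
    have hadj : (G.induce Xᶜ).Adj w ⟨u, huX⟩ := hu
    have hu_supp : (⟨u, huX⟩ : ↥Xᶜ) ∈ c.supp := by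
      rw [ConnectedComponent.mem_supp_iff, ← hwc, ConnectedComponent.eq]
      exact hadj.reachable.symm
    rw [hw, Set.mem_singleton_iff] at hu_supp
    exact hadj.ne hu_supp.symm
  calc trivialComponentCount G X
      ≤ ((G.induce Xᶜ).connectedComponentMk '' {w : ↥Xᶜ | G.neighborSet w ⊆ X}).ncard :=
        Set.ncard_le_ncard hsub
    _ ≤ {w : ↥Xᶜ | G.neighborSet w ⊆ X}.ncard := Set.ncard_image_le
    _ = {v | v ∉ X ∧ G.neighborSet v ⊆ X}.ncard := by
        rw [← Set.ncard_image_of_injective _ Subtype.val_injective]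
        congr 1
        ext v
        simp [and_comm]

lemma ncard_setOf_neighborSet_subset_mul_le [Finite V] {t : ℕ}
    (ht : ∀ v, (edgesWithin G (G.neighborSet v)).ncard = t) (X : Set V) :
    {v | G.neighborSet v ⊆ X}.ncard * t ≤ (edgesWithin G X).ncard * t := by
  classical
  rw [Set.ncard_eq_toFinset_card _, Set.ncard_eq_toFinset_card _]
  refine Finset.card_mul_le_card_mul (fun v e => e ∈ edgesWithin G (G.neighborSet v)) ?_ ?_
  · intro v hv
    rw [← ht v, Set.ncard_eq_toFinset_card _]
    refine Finset.card_le_card fun e he => ?_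
    rw [Set.Finite.mem_toFinset] at he hv
    exact (Finset.mem_bipartiteAbove _).mpr
      ⟨(Set.Finite.mem_toFinset _).mpr (edgesWithin_mono hv he), he⟩
  · intro e he
    rw [Set.Finite.mem_toFinset] at he
    induction e using Sym2.ind with
    | h a b =>
      calc _ ≤ (G.commonNeighbors a b).ncard := by
            rw [Set.ncard_eq_toFinset_card _]
            refine Finset.card_le_card fun v hv => ?_
            have hv := ((Finset.mem_bipartiteBelow _).mp hv).2.2
            exact (Set.Finite.mem_toFinset _).mpr
              ⟨G.adj_symm (hv a (Sym2.mem_mk_left a b)),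
                G.adj_symm (hv b (Sym2.mem_mk_right a b))⟩
        _ ≤ t := ht a ▸ ncard_commonNeighbors_le_ncard_edgesWithin_neighborSet he.1

end

theorem statement5_general {V : Type*} [Fintype V]
    (G : SimpleGraph V)
    (hvt : VertexTransitive G) (htri : ¬ G.CliqueFree 3)
    (X : Set V) :
    trivialComponentCount G X ≤ (edgesWithin G X).ncard := by
  obtain ⟨a, b, c, hab, hac, hbc⟩ : ∃ a b c, G.Adj a b ∧ G.Adj a c ∧ G.Adj b c := by
    classical
    simpa [CliqueFree, is3Clique_iff] using htri
  have ht_pos : 0 < (edgesWithin G (G.neighborSet a)).ncard := by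
    refine (Set.ncard_pos (Set.toFinite _)).mpr ⟨s(b, c), hbc, fun w hw => ?_⟩
    rcases Sym2.mem_iff.mp hw with rfl | rfl
    exacts [hab, hac]
  calc trivialComponentCount G X ≤ {v | v ∉ X ∧ G.neighborSet v ⊆ X}.ncard :=
        trivialComponentCount_le_ncard_setOf_neighborSet_subset X
    _ ≤ {v | G.neighborSet v ⊆ X}.ncard := Set.ncard_le_ncard fun v hv => hv.2
    _ ≤ (edgesWithin G X).ncard :=
        Nat.le_of_mul_le_mul_right (ncard_setOf_neighborSet_subset_mul_le
          (fun v => hvt.ncard_edgesWithin_neighborSet_eq v a) X) ht_pos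

/-- In a vertex-transitive graph containing a triangle, the
number of trivial components of `G − X` is at most the number of edges with both
ends in `X`, for every vertex set `X`. -/
theorem statement5 {V : Type*} [Fintype V] [DecidableEq V]
    (G : SimpleGraph V)
    (hvt : VertexTransitive G) (htri : ¬ G.CliqueFree 3)
    (X : Set V) :
    trivialComponentCount G X ≤ (edgesWithin G X).ncard :=
  statement5_general G hvt htri X
end

section
/- Let G be a connected triangle-free vertex-transitive simple graph of degree k ≥ 5, let s be an integer with 4 ≤ s ≤ 8, and suppose the s-restricted edge-connectivity λ_s(G) exists and λ_s(G) ≤ 3k. Then for every X ⊆ V(G) with |X| ≥ s and |V(G) \ X| ≥ s, one has d_G(X) ≥ λ_s(G); moreover, if the subgraph induced on X or the subgraph induced on V(G) \ X is disconnected, then d_G(X) > λ_s(G). -/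
open SimpleGraph

section Stmt7Aux

open SimpleGraph Finset

variable {V : Type*} [Fintype V] [DecidableEq V] {G : SimpleGraph V}

namespace Stmt7

open scoped Classical in
/-- Ordered adjacent pairs from `S` to `T`. -/
noncomputable def PP (G : SimpleGraph V) (S T : Set V) : Finset (V × V) :=
  Finset.univ.filter fun p => G.Adj p.1 p.2 ∧ p.1 ∈ S ∧ p.2 ∈ T

lemma mem_PP {S T : Set V} {p : V × V} :
    p ∈ PP G S T ↔ G.Adj p.1 p.2 ∧ p.1 ∈ S ∧ p.2 ∈ T := by
  simp [PP]

/-- Connectivity within a vertex set `S`, as a relation on `V`. -/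
def Conn (G : SimpleGraph V) (S : Set V) (v w : V) : Prop :=
  ∃ p : G.Walk v w, ∀ u ∈ p.support, u ∈ S

/-- The connected component of `v` inside `S`. -/
def Comp (G : SimpleGraph V) (S : Set V) (v : V) : Set V := {w | Conn G S v w}

lemma Conn.mem_left {S : Set V} {v w : V} (h : Conn G S v w) : v ∈ S := by
  obtain ⟨p, hp⟩ := h
  exact hp v p.start_mem_support

lemma Conn.mem_right {S : Set V} {v w : V} (h : Conn G S v w) : w ∈ S := by
  obtain ⟨p, hp⟩ := h
  exact hp w p.end_mem_support

lemma mem_comp {S : Set V} {v w : V} : w ∈ Comp G S v ↔ Conn G S v w := Iff.rfl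

lemma conn_refl {S : Set V} {v : V} (hv : v ∈ S) : Conn G S v v :=
  ⟨SimpleGraph.Walk.nil, by intro u hu; simp only [SimpleGraph.Walk.support_nil,
    List.mem_singleton] at hu; subst hu; exact hv⟩

lemma Conn.symm {S : Set V} {v w : V} (h : Conn G S v w) : Conn G S w v := by
  obtain ⟨p, hp⟩ := h
  exact ⟨p.reverse, fun u hu => hp u (by simpa [SimpleGraph.Walk.support_reverse] using hu)⟩

lemma Conn.trans {S : Set V} {u v w : V} (h : Conn G S u v) (h' : Conn G S v w) :
    Conn G S u w := by
  obtain ⟨p, hp⟩ := h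
  obtain ⟨q, hq⟩ := h'
  refine ⟨p.append q, fun x hx => ?_⟩
  rcases (SimpleGraph.Walk.mem_support_append_iff _ _).1 hx with h | h
  · exact hp x h
  · exact hq x h

lemma conn_adj {S : Set V} {v w : V} (hv : v ∈ S) (hw : w ∈ S) (h : G.Adj v w) :
    Conn G S v w :=
  ⟨SimpleGraph.Walk.cons h SimpleGraph.Walk.nil, by
    intro u hu
    simp only [SimpleGraph.Walk.support_cons, SimpleGraph.Walk.support_nil,
      List.mem_cons, List.mem_singleton, List.not_mem_nil, or_false] at hu
    rcases hu with rfl | rfl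
    · exact hv
    · exact hw⟩

lemma comp_subset {S : Set V} {v : V} : Comp G S v ⊆ S := fun _ h => Conn.mem_right (mem_comp.mp h)

lemma mem_comp_self {S : Set V} {v : V} (hv : v ∈ S) : v ∈ Comp G S v := conn_refl hv

lemma comp_eq_of_mem {S : Set V} {v w : V} (h : w ∈ Comp G S v) :
    Comp G S w = Comp G S v := by
  ext x
  exact ⟨fun hx => Conn.trans h hx, fun hx => Conn.trans (Conn.symm h) hx⟩

lemma comp_closed {S : Set V} {v u w : V} (hu : u ∈ Comp G S v) (h : G.Adj u w)
    (hw : w ∈ S) : w ∈ Comp G S v :=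
  Conn.trans (mem_comp.mp hu) (conn_adj (Conn.mem_right (mem_comp.mp hu)) hw h)

lemma comp_mono {S T : Set V} (hST : S ⊆ T) {v : V} : Comp G S v ⊆ Comp G T v := by
  rintro x ⟨p, hp⟩
  exact ⟨p, fun u hu => hST (hp u hu)⟩

lemma mem_comp_of_support {S : Set V} {v w : V} (p : G.Walk v w)
    (hp : ∀ u ∈ p.support, u ∈ S) {u : V} (hu : u ∈ p.support) : u ∈ Comp G S v :=
  ⟨p.takeUntil u hu, fun z hz => hp z (SimpleGraph.Walk.support_takeUntil_subset p hu hz)⟩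

lemma PP_comp_diff {S : Set V} {v : V} : PP G (Comp G S v) (S \ Comp G S v) = ∅ := by
  ext p
  simp only [mem_PP, Finset.notMem_empty, iff_false, not_and]
  intro hadj h1 h2
  exact h2.2 (comp_closed h1 hadj h2.1)

lemma conn_induce_reachable {S : Set V} :
    ∀ {v w : V} (p : G.Walk v w) (hp : ∀ u ∈ p.support, u ∈ S),
      (G.induce S).Reachable ⟨v, hp v p.start_mem_support⟩ ⟨w, hp w p.end_mem_support⟩ := by
  intro v w p
  induction p with
  | nil => intro hp; exact SimpleGraph.Reachable.refl _
  | @cons a b c h q ih =>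
    intro hp
    have ha : a ∈ S := hp a (SimpleGraph.Walk.start_mem_support _)
    have hb : b ∈ S := hp b (by
      rw [SimpleGraph.Walk.support_cons]
      exact List.mem_cons_of_mem _ q.start_mem_support)
    have hq : ∀ u ∈ q.support, u ∈ S := fun u hu => hp u (by
      rw [SimpleGraph.Walk.support_cons]; exact List.mem_cons_of_mem _ hu)
    have hadj : (G.induce S).Adj ⟨a, ha⟩ ⟨b, hb⟩ := h
    exact hadj.reachable.trans (ih hq)

lemma induce_connected_of {S : Set V} (hne : S.Nonempty)
    (h : ∀ v ∈ S, ∀ w ∈ S, Conn G S v w) : (G.induce S).Connected := by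
  haveI : Nonempty ↥S := ⟨⟨hne.choose, hne.choose_spec⟩⟩
  constructor
  rintro ⟨v, hv⟩ ⟨w, hw⟩
  obtain ⟨p, hp⟩ := h v hv w hw
  exact conn_induce_reachable p hp

lemma exists_crossing {A : Set V} :
    ∀ {v w : V} (_ : G.Walk v w) (_ : v ∈ A) (_ : w ∉ A),
      ∃ a b, a ∈ A ∧ b ∉ A ∧ G.Adj a b := by
  intro v w p
  induction p with
  | nil => intro hv hw; exact absurd hv hw
  | @cons a b c h q ih =>
    intro hv hw
    by_cases hb : b ∈ A
    · exact ih hb hw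
    · exact ⟨a, b, hv, hb, h⟩

lemma not_bdry_of_both {Y : Set V} {a b : V}
    (h : (a ∈ Y ∧ b ∈ Y) ∨ (a ∉ Y ∧ b ∉ Y)) : s(a, b) ∉ edgeBoundary G Y := by
  rintro ⟨-, x, hx, y, hy, hxy⟩
  rw [Sym2.eq_iff] at hxy
  simp only [Set.mem_compl_iff] at hy
  rcases hxy with ⟨rfl, rfl⟩ | ⟨rfl, rfl⟩ <;> tauto

lemma del_stays {Y : Set V} :
    ∀ {v w : V}, (G.deleteEdges (edgeBoundary G Y)).Walk v w → v ∈ Y → w ∈ Y := by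
  intro v w p
  induction p with
  | nil => exact id
  | @cons a b c h q ih =>
    intro ha
    rw [SimpleGraph.deleteEdges_adj] at h
    apply ih
    by_contra hb
    exact h.2 ⟨G.mem_edgeSet.mpr h.1, a, ha, b, hb, rfl⟩

lemma conn_del {Y T : Set V} (hT : T ⊆ Y ∨ T ⊆ Yᶜ) {v w : V} (p : G.Walk v w)
    (hp : ∀ u ∈ p.support, u ∈ T) :
    (G.deleteEdges (edgeBoundary G Y)).Reachable v w := by
  refine ⟨p.toDeleteEdges _ fun e he => ?_⟩
  rintro ⟨-, x, hx, y, hy, rfl⟩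
  have hxs : x ∈ p.support := p.fst_mem_support_of_mem_edges he
  have hys : y ∈ p.support := p.snd_mem_support_of_mem_edges he
  rcases hT with hT | hT
  · exact hy (hT (hp y hys))
  · exact hT (hp x hxs) hx

lemma lambdaS_le {s : ℕ} {F : Set (Sym2 V)} (hF : IsRestrictedEdgeCut G s F) :
    lambdaS G s ≤ F.ncard :=
  Nat.sInf_le ⟨F, hF, rfl⟩

lemma isRestrictedEdgeCut_of {s : ℕ} {Y : Set V} (hYne : Y.Nonempty)
    (hYcne : Yᶜ.Nonempty)
    (hbig : ∀ u : V, ∃ D : Set V, s ≤ D.ncard ∧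
      ∀ x ∈ D, (G.deleteEdges (edgeBoundary G Y)).Reachable u x) :
    IsRestrictedEdgeCut G s (edgeBoundary G Y) := by
  refine ⟨fun e he => he.1, ?_, ?_⟩
  · intro hconn'
    obtain ⟨v, hv⟩ := hYne
    obtain ⟨w, hw⟩ := hYcne
    obtain ⟨p⟩ := hconn'.preconnected v w
    exact hw (del_stays p hv)
  · intro c
    obtain ⟨u, rfl⟩ := c.exists_rep
    obtain ⟨D, hD, hreach⟩ := hbig u
    refine le_trans hD (Set.ncard_le_ncard ?_ (Set.toFinite _))
    intro x hx
    exact (SimpleGraph.ConnectedComponent.mem_supp_iff _ _).mpr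
      (SimpleGraph.ConnectedComponent.eq.mpr (hreach x hx).symm)

lemma edgeBoundary_ncard {X : Set V} :
    (edgeBoundary G X).ncard = (PP G X Xᶜ).card := by
  have himg : edgeBoundary G X = (fun p : V × V => s(p.1, p.2)) '' ↑(PP G X Xᶜ) := by
    ext e
    constructor
    · rintro ⟨he, x, hx, y, hy, rfl⟩
      exact ⟨(x, y), by rw [Finset.mem_coe, mem_PP]; exact ⟨G.mem_edgeSet.mp he, hx, hy⟩, rfl⟩
    · rintro ⟨⟨x, y⟩, hp, rfl⟩
      rw [Finset.mem_coe, mem_PP] at hp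
      exact ⟨G.mem_edgeSet.mpr hp.1, x, hp.2.1, y, hp.2.2, rfl⟩
  rw [himg, Set.ncard_image_of_injOn, Set.ncard_coe_finset]
  rintro ⟨a, b⟩ ha ⟨c, d⟩ hc h
  rw [Finset.mem_coe, mem_PP] at ha hc
  simp only [Sym2.eq_iff] at h
  rcases h with ⟨rfl, rfl⟩ | ⟨rfl, rfl⟩
  · rfl
  · exact absurd ha.2.1 hc.2.2

lemma PP_swap_card {S T : Set V} : (PP G S T).card = (PP G T S).card := by
  refine Finset.card_bij' (fun p _ => p.swap) (fun p _ => p.swap) ?_ ?_ ?_ ?_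
  · rintro ⟨a, b⟩ hp
    rw [mem_PP] at hp ⊢
    exact ⟨hp.1.symm, hp.2.2, hp.2.1⟩
  · rintro ⟨a, b⟩ hp
    rw [mem_PP] at hp ⊢
    exact ⟨hp.1.symm, hp.2.2, hp.2.1⟩
  · rintro ⟨a, b⟩ _; rfl
  · rintro ⟨a, b⟩ _; rfl

lemma PP_union_right {S T₁ T₂ : Set V} (h : Disjoint T₁ T₂) :
    (PP G S (T₁ ∪ T₂)).card = (PP G S T₁).card + (PP G S T₂).card := by
  have he : PP G S (T₁ ∪ T₂) = PP G S T₁ ∪ PP G S T₂ := by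
    ext p; simp only [mem_PP, Finset.mem_union, Set.mem_union]; tauto
  rw [he, Finset.card_union_of_disjoint]
  rw [Finset.disjoint_left]
  intro p h1 h2
  exact Set.disjoint_left.mp h (mem_PP.mp h1).2.2 (mem_PP.mp h2).2.2

lemma PP_union_left {S₁ S₂ T : Set V} (h : Disjoint S₁ S₂) :
    (PP G (S₁ ∪ S₂) T).card = (PP G S₁ T).card + (PP G S₂ T).card := by
  rw [PP_swap_card, PP_union_right h, PP_swap_card (S := T), PP_swap_card (S := T)]

lemma B_split {S C : Set V} (hCS : C ⊆ S) (hcl : PP G C (S \ C) = ∅) :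
    (PP G S Sᶜ).card = (PP G C Cᶜ).card + (PP G (S \ C) (S \ C)ᶜ).card := by
  have hd1 : Disjoint C (S \ C) := Set.disjoint_sdiff_right
  have hd2 : Disjoint Sᶜ (S \ C) := by
    rw [Set.disjoint_left]; intro x hx hx2; exact hx hx2.1
  have hd3 : Disjoint Sᶜ C := by
    rw [Set.disjoint_left]; intro x hx hx2; exact hx (hCS hx2)
  have h0 : (PP G S Sᶜ).card = (PP G C Sᶜ).card + (PP G (S \ C) Sᶜ).card := by
    rw [show PP G S Sᶜ = PP G (C ∪ S \ C) Sᶜ by rw [Set.union_diff_cancel hCS]]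
    exact PP_union_left hd1
  have hCc : Cᶜ = Sᶜ ∪ (S \ C) := by
    ext x
    have := @hCS x
    by_cases hx : x ∈ S <;> simp [hx] <;> tauto
  have h2 : (PP G C Cᶜ).card = (PP G C Sᶜ).card + (PP G C (S \ C)).card := by
    rw [show PP G C Cᶜ = PP G C (Sᶜ ∪ (S \ C)) by rw [← hCc]]
    exact PP_union_right hd2
  have hScc : (S \ C)ᶜ = Sᶜ ∪ C := by
    ext x
    have := @hCS x
    by_cases hx : x ∈ S <;> simp [hx] <;> tauto
  have h3 : (PP G (S \ C) (S \ C)ᶜ).card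
      = (PP G (S \ C) Sᶜ).card + (PP G (S \ C) C).card := by
    rw [show PP G (S \ C) (S \ C)ᶜ = PP G (S \ C) (Sᶜ ∪ C) by rw [← hScc]]
    exact PP_union_right hd3
  have h4 : (PP G C (S \ C)).card = 0 := by rw [hcl]; rfl
  have h5 : (PP G (S \ C) C).card = 0 := by rw [PP_swap_card, hcl]; rfl
  omega

lemma B_pos (hconn : G.Connected) {C : Set V} {v y : V} (hv : v ∈ C) (hy : y ∉ C) :
    1 ≤ (PP G C Cᶜ).card := by
  obtain ⟨p⟩ := hconn.preconnected v y
  obtain ⟨a, b, ha, hb, hab⟩ := exists_crossing p hv hy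
  exact Finset.card_pos.mpr ⟨(a, b), mem_PP.mpr ⟨hab, ha, hb⟩⟩

open scoped Classical in
/-- The finset of elements of a set. -/
noncomputable def FS (S : Set V) : Finset V := Finset.univ.filter fun v => v ∈ S

lemma mem_FS {S : Set V} {v : V} : v ∈ FS S ↔ v ∈ S := by simp [FS]

lemma FS_card (S : Set V) : (FS S).card = S.ncard := by
  classical
  rw [Set.ncard_eq_toFinset_card']
  have he : FS S = S.toFinset := by ext v; rw [mem_FS, Set.mem_toFinset]
  rw [he]

/-- In-neighbourhood of `v` inside `C`. -/
def NIn (G : SimpleGraph V) (v : V) (C : Set V) : Set V := {w | w ∈ C ∧ G.Adj v w}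

open scoped Classical in
lemma PP_card_eq_sum {S C : Set V} :
    (PP G S C).card = ∑ v ∈ FS S, (NIn G v C).ncard := by
  rw [Finset.card_eq_sum_card_fiberwise (f := Prod.fst) (t := FS S)
    (fun p hp => mem_FS.mpr (mem_PP.mp hp).2.1)]
  refine Finset.sum_congr rfl fun v hv => ?_
  rw [mem_FS] at hv
  rw [← FS_card]
  refine Finset.card_bij' (fun p _ => p.2) (fun w _ => (v, w)) ?_ ?_ ?_ ?_
  · rintro ⟨a, b⟩ hp
    rw [Finset.mem_filter, mem_PP] at hp
    obtain ⟨⟨hadj, _, hbC⟩, hav⟩ := hp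
    simp only at hav
    subst hav
    exact mem_FS.mpr ⟨hbC, hadj⟩
  · intro w hw
    rw [mem_FS] at hw
    rw [Finset.mem_filter, mem_PP]
    exact ⟨⟨hw.2, hv, hw.1⟩, rfl⟩
  · rintro ⟨a, b⟩ hp
    rw [Finset.mem_filter] at hp
    have hav : a = v := hp.2
    subst hav
    rfl
  · intro w hw
    rfl

lemma handshake [DecidableRel G.Adj] (hreg : G.IsRegularOfDegree k) (S : Set V) :
    k * S.ncard = (PP G S S).card + (PP G S Sᶜ).card := by
  have h1 : (PP G S Set.univ).card = (PP G S S).card + (PP G S Sᶜ).card := by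
    rw [show PP G S Set.univ = PP G S (S ∪ Sᶜ) by rw [Set.union_compl_self]]
    exact PP_union_right disjoint_compl_right
  rw [← h1, PP_card_eq_sum]
  have h2 : ∀ v ∈ FS S, (NIn G v Set.univ).ncard = k := by
    intro v _
    have he : FS (NIn G v Set.univ) = G.neighborFinset v := by
      ext w
      rw [mem_FS, SimpleGraph.mem_neighborFinset]
      simp [NIn]
    rw [← FS_card, he]
    exact hreg v
  rw [Finset.sum_congr rfl h2, Finset.sum_const, smul_eq_mul, FS_card, Nat.mul_comm]

lemma mantel_lite (htri : G.CliqueFree 3) {C : Set V} (hne : C.Nonempty) :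
    ∃ d, d + 1 ≤ C.ncard ∧ (PP G C C).card ≤ 2 * ((C.ncard - d) * d) := by
  classical
  obtain ⟨v, hvC, hvmax⟩ := Finset.exists_max_image (FS C)
    (fun u => (NIn G u C).ncard) ⟨hne.choose, mem_FS.mpr hne.choose_spec⟩
  rw [mem_FS] at hvC
  set d := (NIn G v C).ncard with hd
  set N := NIn G v C with hN
  have hNC : N ⊆ C := fun w hw => hw.1
  have hvN : v ∉ N := fun h => G.irrefl h.2
  refine ⟨d, ?_, ?_⟩
  · have hss : N ⊂ C := ⟨hNC, fun h => hvN (h hvC)⟩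
    have := Set.ncard_lt_ncard hss (Set.toFinite C)
    omega
  · have hsplit : (PP G C C).card = (PP G N C).card + (PP G (C \ N) C).card := by
      rw [show PP G C C = PP G (N ∪ C \ N) C by rw [Set.union_diff_cancel hNC]]
      exact PP_union_left Set.disjoint_sdiff_right
    have h1 : (PP G N C).card ≤ (PP G C (C \ N)).card := by
      apply Finset.card_le_card
      intro p hp
      rw [mem_PP] at hp ⊢
      obtain ⟨hadj, hp1, hp2⟩ := hp
      refine ⟨hadj, hNC hp1, hp2, fun hp2N => ?_⟩
      exact htri {v, p.1, p.2} (SimpleGraph.is3Clique_triple_iff.mpr ⟨hp1.2, hp2N.2, hadj⟩)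
    have h2 : (PP G C (C \ N)).card = (PP G (C \ N) C).card := PP_swap_card
    have h3 : (PP G (C \ N) C).card ≤ (C.ncard - d) * d := by
      rw [PP_card_eq_sum]
      have hb : ∀ u ∈ FS (C \ N), (NIn G u C).ncard ≤ d := by
        intro u hu
        rw [mem_FS] at hu
        exact hvmax u (mem_FS.mpr hu.1)
      calc ∑ v ∈ FS (C \ N), (NIn G v C).ncard
          ≤ ∑ _v ∈ FS (C \ N), d := Finset.sum_le_sum hb
        _ = (FS (C \ N)).card * d := by rw [Finset.sum_const, smul_eq_mul]
        _ = (C \ N).ncard * d := by rw [FS_card]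
        _ = (C.ncard - d) * d := by rw [Set.ncard_diff hNC]
    omega

lemma bound_high [DecidableRel G.Adj] (hreg : G.IsRegularOfDegree k)
    (htri : G.CliqueFree 3) (hk : 5 ≤ k) {C : Set V}
    (h3 : 3 ≤ C.ncard) (h7 : C.ncard ≤ 7) :
    3 * k ≤ (PP G C Cᶜ).card + 4 := by
  have hne : C.Nonempty := Set.nonempty_of_ncard_ne_zero (by omega)
  obtain ⟨d, hd1, hd2⟩ := mantel_lite htri hne
  have hh := handshake hreg C
  set t := C.ncard with ht
  clear_value t
  have hd7 : d ≤ 6 := by omega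
  interval_cases t <;> interval_cases d <;> omega

lemma bound_low [DecidableRel G.Adj] (hreg : G.IsRegularOfDegree k)
    (htri : G.CliqueFree 3) (hk : 5 ≤ k) {C : Set V}
    (h1 : 1 ≤ C.ncard) (h7 : C.ncard ≤ 7) :
    k ≤ (PP G C Cᶜ).card := by
  have hne : C.Nonempty := Set.nonempty_of_ncard_ne_zero (by omega)
  obtain ⟨d, hd1, hd2⟩ := mantel_lite htri hne
  have hh := handshake hreg C
  set t := C.ncard with ht
  clear_value t
  have hd7 : d ≤ 6 := by omega
  interval_cases t <;> interval_cases d <;> omega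

lemma strict_side [DecidableRel G.Adj] {sp : ℕ} (hconn : G.Connected) {Y : Set V}
    (hYb : ∀ u ∈ Y, sp ≤ (Comp G Y u).ncard) (hYcb : ∀ u ∈ Yᶜ, sp ≤ (Comp G Yᶜ u).ncard)
    (hYcne : Yᶜ.Nonempty)
    (hdis : ∃ v ∈ Y, ∃ w ∈ Y, ¬ Conn G Y v w) :
    lambdaS G sp < (PP G Y Yᶜ).card := by
  obtain ⟨v, hv, w, hw, hnc⟩ := hdis
  have hCsub : Comp G Y v ⊆ Y := comp_subset
  have hwC : w ∉ Comp G Y v := hnc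
  have hY'ne : (Y \ Comp G Y v).Nonempty := ⟨w, hw, hwC⟩
  have hYc'sub : Yᶜ ⊆ (Y \ Comp G Y v)ᶜ := by
    intro x hx hx2
    exact hx hx2.1
  have hY'cne : (Y \ Comp G Y v)ᶜ.Nonempty := hYcne.mono hYc'sub
  have hCcomp : Comp G Y v ⊆ (Y \ Comp G Y v)ᶜ := by
    intro x hx hx2
    exact hx2.2 hx
  obtain ⟨y0, hy0⟩ := hYcne
  have hy0C : y0 ∉ Comp G Y v := fun h => hy0 (hCsub h)
  obtain ⟨p0⟩ := hconn.preconnected v y0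
  obtain ⟨a, b, haC, hbC, hab⟩ := exists_crossing p0 (mem_comp_self hv) hy0C
  have hbYc : b ∈ Yᶜ := by
    intro hbY
    exact hbC (comp_closed haC hab hbY)
  have hbig : ∀ u : V, ∃ D : Set V, sp ≤ D.ncard ∧
      ∀ x ∈ D, (G.deleteEdges (edgeBoundary G (Y \ Comp G Y v))).Reachable u x := by
    intro u
    by_cases hu1 : u ∈ Y \ Comp G Y v
    · refine ⟨Comp G Y u, hYb u hu1.1, fun x hx => ?_⟩
      have hCu : Comp G Y u ⊆ Y \ Comp G Y v := by
        intro z hz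
        refine ⟨Conn.mem_right (mem_comp.mp hz), fun hzC => hu1.2 ?_⟩
        rw [← comp_eq_of_mem hzC, comp_eq_of_mem hz]
        exact mem_comp_self hu1.1
      obtain ⟨p, hp⟩ := mem_comp.mp hx
      have hp' : ∀ z ∈ p.support, z ∈ Comp G Y u := fun z hz => mem_comp_of_support p hp hz
      exact conn_del (Or.inl hCu) p hp'
    · by_cases hu2 : u ∈ Yᶜ
      · refine ⟨Comp G Yᶜ u, hYcb u hu2, fun x hx => ?_⟩
        obtain ⟨p, hp⟩ := mem_comp.mp hx
        exact conn_del (Or.inr hYc'sub) p hp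
      · have huY : u ∈ Y := by by_contra h; exact hu2 h
        have huC : u ∈ Comp G Y v := by
          by_contra h
          exact hu1 ⟨huY, h⟩
        refine ⟨Comp G Yᶜ b, hYcb b hbYc, fun x hx => ?_⟩
        have r1 : (G.deleteEdges (edgeBoundary G (Y \ Comp G Y v))).Reachable u a := by
          have hca : Conn G Y u a :=
            Conn.trans (Conn.symm (mem_comp.mp huC)) (mem_comp.mp haC)
          obtain ⟨p, hp⟩ := hca
          have hp' : ∀ z ∈ p.support, z ∈ Comp G Y v := by
            intro z hz
            rw [← comp_eq_of_mem huC]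
            exact mem_comp_of_support p hp hz
          exact conn_del (Or.inr hCcomp) p hp'
        have r2 : (G.deleteEdges (edgeBoundary G (Y \ Comp G Y v))).Adj a b := by
          rw [SimpleGraph.deleteEdges_adj]
          refine ⟨hab, not_bdry_of_both (Or.inr ⟨?_, ?_⟩)⟩
          · exact fun h2 => h2.2 haC
          · exact fun h2 => hbYc h2.1
        have r3 : (G.deleteEdges (edgeBoundary G (Y \ Comp G Y v))).Reachable b x := by
          obtain ⟨p, hp⟩ := mem_comp.mp hx
          exact conn_del (Or.inr hYc'sub) p hp
        exact (r1.trans r2.reachable).trans r3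
  have hcut := isRestrictedEdgeCut_of hY'ne hY'cne hbig
  have hle := lambdaS_le hcut
  rw [edgeBoundary_ncard] at hle
  have hsplit := B_split hCsub (PP_comp_diff (S := Y) (v := v))
  have h1 : 1 ≤ (PP G (Comp G Y v) (Comp G Y v)ᶜ).card :=
    Finset.card_pos.mpr ⟨(a, b), mem_PP.mpr ⟨hab, haC, hbC⟩⟩
  omega

lemma main_ind [DecidableRel G.Adj] {k s : ℕ} (hconn : G.Connected) (htri : G.CliqueFree 3)
    (hreg : G.IsRegularOfDegree k) (hk : 5 ≤ k) (hs1 : 4 ≤ s) (hs2 : s ≤ 8)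
    (hlam : lambdaS G s ≤ 3 * k) :
    ∀ n : ℕ, ∀ Y : Set V, (PP G Y Yᶜ).card = n → s ≤ Y.ncard → s ≤ Yᶜ.ncard →
      lambdaS G s ≤ n ∧
      (((∃ v ∈ Y, ∃ w ∈ Y, ¬ Conn G Y v w) ∨ (∃ v ∈ Yᶜ, ∃ w ∈ Yᶜ, ¬ Conn G Yᶜ v w)) →
        lambdaS G s < n) := by
  intro n
  induction n using Nat.strong_induction_on with
  | _ n IH =>
  intro Y hBY hY hYc
  have key : ∀ S : Set V, (PP G S Sᶜ).card = n → s ≤ S.ncard → s ≤ Sᶜ.ncard →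
      (∃ u ∈ S, (Comp G S u).ncard < s) → lambdaS G s < n := by
    intro S hBS hS hSc hsm
    obtain ⟨v, hvS, hvsmall⟩ := hsm
    have hCsub : Comp G S v ⊆ S := comp_subset
    have hsplitB := B_split hCsub (PP_comp_diff (S := S) (v := v))
    by_cases hrest : s ≤ (S \ Comp G S v).ncard
    · -- move the small component across and recurse
      obtain ⟨y, hy⟩ : Sᶜ.Nonempty := Set.nonempty_of_ncard_ne_zero (by omega)
      have hyC : y ∉ Comp G S v := fun h => hy (hCsub h)
      have hBC1 : 1 ≤ (PP G (Comp G S v) (Comp G S v)ᶜ).card :=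
        B_pos hconn (mem_comp_self hvS) hyC
      have hm : (PP G (S \ Comp G S v) (S \ Comp G S v)ᶜ).card < n := by omega
      have hrestc : s ≤ (S \ Comp G S v)ᶜ.ncard := by
        refine le_trans hSc (Set.ncard_le_ncard ?_ (Set.toFinite _))
        intro x hx hx2
        exact hx hx2.1
      have := (IH _ hm (S \ Comp G S v) rfl hrest hrestc).1
      omega
    · -- all components of S are small; counting argument
      rw [not_le] at hrest
      have hallsmall : ∀ u ∈ S, (Comp G S u).ncard ≤ 7 := by
        intro u hu
        by_cases huC : u ∈ Comp G S v
        · rw [comp_eq_of_mem huC]; omega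
        · have hsub2 : Comp G S u ⊆ S \ Comp G S v := by
            intro x hx
            refine ⟨Conn.mem_right (mem_comp.mp hx), fun hxC => huC ?_⟩
            rw [← comp_eq_of_mem hxC, comp_eq_of_mem hx]
            exact mem_comp_self hu
          have := Set.ncard_le_ncard hsub2 (Set.toFinite _)
          omega
      have h3k : 3 * k < n := by
        by_cases hbig3 : ∃ u ∈ S, 3 ≤ (Comp G S u).ncard
        · obtain ⟨u, huS, hu3⟩ := hbig3
          have hu7 : (Comp G S u).ncard ≤ 7 := hallsmall u huS
          have hC1sub : Comp G S u ⊆ S := comp_subset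
          have hsplit1 := B_split hC1sub (PP_comp_diff (S := S) (v := u))
          have hne1 : (S \ Comp G S u).Nonempty := by
            rw [Set.diff_nonempty]
            intro hsub
            have hv' : v ∈ Comp G S u := hsub hvS
            have hSle : S.ncard ≤ (Comp G S v).ncard := by
              rw [comp_eq_of_mem hv']
              exact Set.ncard_le_ncard hsub (Set.toFinite _)
            omega
          obtain ⟨v₂, hv₂⟩ := hne1
          have hC2sub : Comp G (S \ Comp G S u) v₂ ⊆ S \ Comp G S u := comp_subset
          have hsplit2 := B_split hC2sub
            (PP_comp_diff (S := S \ Comp G S u) (v := v₂))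
          have hC2le : (Comp G (S \ Comp G S u) v₂).ncard ≤ 7 := by
            refine le_trans
              (Set.ncard_le_ncard (comp_mono Set.diff_subset) (Set.toFinite _)) ?_
            exact hallsmall v₂ hv₂.1
          have hC2ge : 1 ≤ (Comp G (S \ Comp G S u) v₂).ncard := by
            have hmem : v₂ ∈ Comp G (S \ Comp G S u) v₂ := mem_comp_self hv₂
            have := (Set.ncard_pos (Set.toFinite _)).mpr ⟨v₂, hmem⟩
            omega
          have hb1 := bound_high hreg htri hk hu3 hu7
          have hb2 := bound_low hreg htri hk hC2ge hC2le
          omega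
        · push_neg at hbig3
          have hdeg : ∀ u ∈ FS S, (NIn G u S).ncard ≤ 1 := by
            intro u hu
            rw [mem_FS] at hu
            have hsub : NIn G u S ⊆ Comp G S u \ {u} := by
              intro w hw
              refine ⟨comp_closed (mem_comp_self hu) hw.2 hw.1, ?_⟩
              simp only [Set.mem_singleton_iff]
              exact fun he => G.irrefl (he ▸ hw.2)
            have h1 := Set.ncard_le_ncard hsub (Set.toFinite _)
            have h2 : (Comp G S u \ {u}).ncard = (Comp G S u).ncard - 1 := by
              rw [Set.ncard_diff (by simpa using mem_comp_self hu), Set.ncard_singleton]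
            have h3 := hbig3 u hu
            omega
          have hsum : (PP G S S).card ≤ S.ncard := by
            rw [PP_card_eq_sum]
            calc ∑ v ∈ FS S, (NIn G v S).ncard
                ≤ ∑ _v ∈ FS S, 1 := Finset.sum_le_sum hdeg
              _ = (FS S).card := by rw [Finset.sum_const, smul_eq_mul, Nat.mul_one]
              _ = S.ncard := FS_card S
          have hhs := handshake hreg S
          have hm4 : 4 ≤ S.ncard := le_trans hs1 hS
          have hkm : (k - 1) * S.ncard + S.ncard = k * S.ncard := by
            have h5 : k - 1 + 1 = k := by omega
            calc (k - 1) * S.ncard + S.ncard = (k - 1 + 1) * S.ncard := by ring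
              _ = k * S.ncard := by rw [h5]
          have hge : (k - 1) * 4 ≤ (k - 1) * S.ncard := Nat.mul_le_mul_left _ hm4
          set A := k * S.ncard with hA
          set Bk := (k - 1) * S.ncard with hBk
          clear_value A Bk
          omega
      omega
  by_cases hall : (∀ u ∈ Y, s ≤ (Comp G Y u).ncard) ∧ (∀ u ∈ Yᶜ, s ≤ (Comp G Yᶜ u).ncard)
  · have hYne : Y.Nonempty := Set.nonempty_of_ncard_ne_zero (by omega)
    have hYcne : Yᶜ.Nonempty := Set.nonempty_of_ncard_ne_zero (by omega)
    have hcut : IsRestrictedEdgeCut G s (edgeBoundary G Y) := by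
      refine isRestrictedEdgeCut_of hYne hYcne ?_
      intro u
      by_cases hu : u ∈ Y
      · refine ⟨Comp G Y u, hall.1 u hu, fun x hx => ?_⟩
        obtain ⟨p, hp⟩ := mem_comp.mp hx
        exact conn_del (Or.inl subset_rfl) p hp
      · refine ⟨Comp G Yᶜ u, hall.2 u hu, fun x hx => ?_⟩
        obtain ⟨p, hp⟩ := mem_comp.mp hx
        exact conn_del (Or.inr subset_rfl) p hp
    have hle := lambdaS_le hcut
    rw [edgeBoundary_ncard, hBY] at hle
    refine ⟨hle, ?_⟩
    rintro (h | h)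
    · have := strict_side hconn hall.1 hall.2 hYcne h
      omega
    · have hYcc : ∀ u ∈ Yᶜᶜ, s ≤ (Comp G Yᶜᶜ u).ncard := by
        rw [compl_compl]; exact hall.1
      have hYccne : Yᶜᶜ.Nonempty := by rw [compl_compl]; exact hYne
      have hlt := strict_side hconn hall.2 hYcc hYccne h
      have heq : (PP G Yᶜ Yᶜᶜ).card = n := by
        rw [compl_compl, PP_swap_card]
        exact hBY
      omega
  · rw [not_and_or] at hall
    rcases hall with h | h
    · push_neg at h
      obtain ⟨u, hu, hsm⟩ := h
      have hlt := key Y hBY hY hYc ⟨u, hu, hsm⟩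
      exact ⟨hlt.le, fun _ => hlt⟩
    · push_neg at h
      obtain ⟨u, hu, hsm⟩ := h
      have hYcc : s ≤ Yᶜᶜ.ncard := by rw [compl_compl]; exact hY
      have heq : (PP G Yᶜ Yᶜᶜ).card = n := by
        rw [compl_compl, PP_swap_card]
        exact hBY
      have hlt := key Yᶜ heq hYc hYcc ⟨u, hu, hsm⟩
      exact ⟨hlt.le, fun _ => hlt⟩

end Stmt7


end Stmt7Aux


open Stmt7


/-- (Lemma 3.1(a)) Let `G` be connected triangle-free
vertex-transitive of degree `k ≥ 5`, `4 ≤ s ≤ 8`, with `λ_s(G)` existing and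
`λ_s(G) ≤ 3k`. Then `d_G(X) ≥ λ_s(G)` whenever `|X| ≥ s` and `|V \ X| ≥ s`, with
strict inequality if `G[X]` or `G[V \ X]` is disconnected. -/
theorem statement7 {V : Type*} [Fintype V] [DecidableEq V]
    (G : SimpleGraph V) [DecidableRel G.Adj] (k s : ℕ)
    (hconn : G.Connected) (htri : G.CliqueFree 3) (hvt : VertexTransitive G)
    (hreg : G.IsRegularOfDegree k) (hk : 5 ≤ k)
    (hs1 : 4 ≤ s) (hs2 : s ≤ 8)
    (hex : ∃ F : Set (Sym2 V), IsRestrictedEdgeCut G s F)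
    (hlam : lambdaS G s ≤ 3 * k)
    (X : Set V) (hX1 : s ≤ X.ncard) (hX2 : s ≤ Xᶜ.ncard) :
    lambdaS G s ≤ (edgeBoundary G X).ncard ∧
      ((¬ (G.induce X).Connected ∨ ¬ (G.induce Xᶜ).Connected) →
        lambdaS G s < (edgeBoundary G X).ncard) := by
  obtain ⟨hle, hstrict⟩ :=
    main_ind hconn htri hreg hk hs1 hs2 hlam ((PP G X Xᶜ).card) X rfl hX1 hX2
  constructor
  · rw [edgeBoundary_ncard]
    exact hle
  · intro hdis
    rw [edgeBoundary_ncard]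
    apply hstrict
    have hXne : X.Nonempty := Set.nonempty_of_ncard_ne_zero (by omega)
    have hXcne : Xᶜ.Nonempty := Set.nonempty_of_ncard_ne_zero (by omega)
    rcases hdis with h | h
    · left
      by_contra hno
      push_neg at hno
      exact h (induce_connected_of hXne hno)
    · right
      by_contra hno
      push_neg at hno
      exact h (induce_connected_of hXcne hno)
end

section
/- Let G be a connected triangle-free vertex-transitive simple graph of degree k ≥ 5, let s be an integer with 4 ≤ s ≤ 8, suppose λ_s(G) exists and λ_s(G) ≤ 3k, and let S be a λ_s-atom of G. Then for every A ⊆ S with 1 ≤ |A| ≤ |S| − s, the number of edges from A to S \ A is strictly greater than d_G(A)/2. -/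
open SimpleGraph

/-!
Put `B = S \ A`. If the claim failed, the identity
`d(S \ A) + d(A) = d(S) + 2 e(A, S \ A)` would give `d(B) ≤ d(S) = λ_s`. Absorb into `B` the
components of `G - ∇(B)` outside `B` with fewer than `s` vertices, then drop the components
inside with fewer than `s` vertices. Neither step creates boundary edges, and the absorbed pieces
lie in `S` because the components outside `S` are large. If nothing is left, the enlarged set,
of at least `s` vertices, splits into pieces of fewer than `s ≤ 8` vertices, and regularity with
Mantel's bound (a triangle-free piece with `m` vertices has at least `k m - m² / 2` boundary
edges) forces more than `3k ≥ λ_s` boundary edges. Otherwise what is left is a `λ_s`-fragment inside `S`, hence `S` itself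
by minimality of the atom, and then `∇(B) = ∇(S)`, which is impossible in a connected graph as
`∅ ≠ A ⊆ S`.
-/

namespace SimpleGraph

open Finset

variable {V : Type*} {G : SimpleGraph V} {A B S X Y Z : Set V} {k s : ℕ} {u v w : V}

lemma edgeBoundary_compl (G : SimpleGraph V) (X : Set V) :
    edgeBoundary G Xᶜ = edgeBoundary G X := by
  ext e
  simp only [edgeBoundary, compl_compl, Set.mem_ofPred_eq]
  refine and_congr_right fun _ => ⟨?_, ?_⟩ <;>
    rintro ⟨x, hx, y, hy, rfl⟩ <;> exact ⟨y, hy, x, hx, Sym2.eq_swap⟩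

lemma mk_mem_edgeBoundary_iff :
    s(u, v) ∈ edgeBoundary G X ↔ G.Adj u v ∧ ¬(u ∈ X ↔ v ∈ X) := by
  simp only [edgeBoundary, Set.mem_ofPred_eq, mem_edgeSet, Sym2.eq_iff, Set.mem_compl_iff]
  constructor
  · rintro ⟨h, x, hx, y, hy, ⟨rfl, rfl⟩ | ⟨rfl, rfl⟩⟩ <;> exact ⟨h, by tauto⟩
  · rintro ⟨h, huv⟩
    by_cases hu : u ∈ X
    · exact ⟨h, u, hu, v, by tauto, Or.inl ⟨rfl, rfl⟩⟩
    · exact ⟨h, v, by tauto, u, hu, Or.inr ⟨rfl, rfl⟩⟩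

lemma deleteEdges_edgeBoundary_adj :
    (G.deleteEdges (edgeBoundary G X)).Adj u v ↔ G.Adj u v ∧ (u ∈ X ↔ v ∈ X) := by
  rw [deleteEdges_adj, mk_mem_edgeBoundary_iff]
  tauto

variable (G) in
def edgesBetween (X Y : Set V) : Set (Sym2 V) :=
  {e | e ∈ G.edgeSet ∧ ∃ x ∈ X, ∃ y ∈ Y, e = s(x, y)}

lemma edgeBoundary_eq_edgesBetween : edgeBoundary G X = G.edgesBetween X Xᶜ := rfl

lemma inducedEdgeBoundary_eq_edgesBetween :
    inducedEdgeBoundary G S A = G.edgesBetween A (S \ A) := rfl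

lemma mk_mem_edgesBetween_iff {a b : V} :
    s(a, b) ∈ G.edgesBetween X Y ↔ G.Adj a b ∧ (a ∈ X ∧ b ∈ Y ∨ b ∈ X ∧ a ∈ Y) := by
  simp only [edgesBetween, Set.mem_ofPred_eq, mem_edgeSet, Sym2.eq_iff]
  constructor
  · rintro ⟨h, x, hx, y, hy, ⟨rfl, rfl⟩ | ⟨rfl, rfl⟩⟩ <;> tauto
  · rintro ⟨h, ⟨ha, hb⟩ | ⟨hb, ha⟩⟩
    · exact ⟨h, a, ha, b, hb, Or.inl ⟨rfl, rfl⟩⟩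
    · exact ⟨h, b, hb, a, ha, Or.inr ⟨rfl, rfl⟩⟩

lemma edgesBetween_comm : G.edgesBetween X Y = G.edgesBetween Y X := by
  ext e
  induction e using Sym2.ind with
  | _ a b => simp only [mk_mem_edgesBetween_iff]; tauto

lemma ncard_edgesBetween_union_right [Finite V] (hYZ : Disjoint Y Z) (hXZ : Disjoint X Z) :
    (G.edgesBetween X (Y ∪ Z)).ncard =
      (G.edgesBetween X Y).ncard + (G.edgesBetween X Z).ncard := by
  have hunion : G.edgesBetween X (Y ∪ Z) = G.edgesBetween X Y ∪ G.edgesBetween X Z := by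
    ext e
    induction e using Sym2.ind with
    | _ a b => simp only [Set.mem_union, mk_mem_edgesBetween_iff]; tauto
  refine hunion ▸ Set.ncard_union_eq (Set.disjoint_left.2 fun e heY heZ => ?_)
  induction e using Sym2.ind with
  | _ a b =>
    rw [mk_mem_edgesBetween_iff] at heY heZ
    have := @Set.disjoint_left.1 hYZ a; have := @Set.disjoint_left.1 hYZ b
    have := @Set.disjoint_left.1 hXZ a; have := @Set.disjoint_left.1 hXZ b
    tauto

lemma ncard_edgeBoundary_sdiff_add [Finite V] (hAS : A ⊆ S) :
    (edgeBoundary G (S \ A)).ncard + (edgeBoundary G A).ncard =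
      (edgeBoundary G S).ncard + 2 * (inducedEdgeBoundary G S A).ncard := by
  have hA : Aᶜ = (S \ A) ∪ Sᶜ := by
    ext x; have := @hAS x; simp only [Set.mem_compl_iff, Set.mem_union, Set.mem_sdiff]; tauto
  have hB : (S \ A)ᶜ = A ∪ Sᶜ := by
    ext x; have := @hAS x; simp only [Set.mem_compl_iff, Set.mem_union, Set.mem_sdiff]; tauto
  have hS : Sᶜᶜ = A ∪ (S \ A) := by rw [compl_compl, Set.union_sdiff_cancel hAS]
  have hdA : Disjoint A (S \ A) := Set.disjoint_sdiff_right
  have hdSA : Disjoint (S \ A) Sᶜ := disjoint_compl_right.mono_left Set.sdiff_subset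
  have hdSA' : Disjoint A Sᶜ := disjoint_compl_right.mono_left hAS
  rw [← edgeBoundary_compl G S, edgeBoundary_eq_edgesBetween, edgeBoundary_eq_edgesBetween,
    edgeBoundary_eq_edgesBetween, hA, hB, hS, inducedEdgeBoundary_eq_edgesBetween,
    ncard_edgesBetween_union_right hdSA hdSA', ncard_edgesBetween_union_right hdSA' hdSA,
    ncard_edgesBetween_union_right hdA hdSA.symm,
    edgesBetween_comm (X := S \ A), edgesBetween_comm (X := Sᶜ), edgesBetween_comm (X := Sᶜ)]
  omega

def cutComponent (G : SimpleGraph V) (X : Set V) (v : V) : Set V :=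
  ((G.deleteEdges (edgeBoundary G X)).connectedComponentMk v).supp

lemma mem_cutComponent_iff :
    w ∈ G.cutComponent X v ↔ (G.deleteEdges (edgeBoundary G X)).Reachable w v :=
  ConnectedComponent.eq

lemma mem_cutComponent_self : v ∈ G.cutComponent X v :=
  mem_cutComponent_iff.2 .rfl

lemma cutComponent_eq_of_mem (h : w ∈ G.cutComponent X v) :
    G.cutComponent X w = G.cutComponent X v := by
  rw [cutComponent, (ConnectedComponent.mem_supp_iff _ _).1 h]; rfl

lemma cutComponent_compl : G.cutComponent Xᶜ v = G.cutComponent X v := by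
  rw [cutComponent, edgeBoundary_compl]; rfl

lemma disjoint_cutComponent (h : w ∉ G.cutComponent X v) :
    Disjoint (G.cutComponent X v) (G.cutComponent X w) :=
  Set.disjoint_left.2 fun _ hv hw =>
    h (cutComponent_eq_of_mem hv ▸ cutComponent_eq_of_mem hw ▸ mem_cutComponent_self)

lemma mem_iff_of_reachable_deleteEdges (h : (G.deleteEdges (edgeBoundary G X)).Reachable u v) :
    u ∈ X ↔ v ∈ X := by
  obtain ⟨p⟩ := h
  by_contra huv
  have key : ∀ {a b}, (G.deleteEdges (edgeBoundary G X)).Walk a b → a ∈ X → b ∉ X → False :=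
    fun p ha hb => by
      obtain ⟨d, -, hd, hd'⟩ := p.exists_boundary_dart X ha hb
      exact hd' ((deleteEdges_edgeBoundary_adj.1 d.adj).2.1 hd)
  by_cases hu : u ∈ X
  · exact key p hu (by tauto)
  · exact key p.reverse (by tauto) hu

lemma mem_iff_of_mem_cutComponent (h : w ∈ G.cutComponent X v) : w ∈ X ↔ v ∈ X :=
  mem_iff_of_reachable_deleteEdges (mem_cutComponent_iff.1 h)

lemma cutComponent_subset (hv : v ∈ X) : G.cutComponent X v ⊆ X :=
  fun _ hw => (mem_iff_of_mem_cutComponent hw).2 hv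

lemma cutComponent_subset_cutComponent (h : ∀ w ∈ G.cutComponent X v, w ∈ Y ↔ v ∈ Y) :
    G.cutComponent X v ⊆ G.cutComponent Y v := by
  classical
  intro w hw
  obtain ⟨p⟩ := mem_cutComponent_iff.1 hw
  have hsupp : ∀ x ∈ p.support, x ∈ G.cutComponent X v :=
    fun x hx => mem_cutComponent_iff.2 ⟨p.dropUntil x hx⟩
  refine mem_cutComponent_iff.2 ⟨p.transfer _ fun e he => ?_⟩
  induction e using Sym2.ind with
  | _ a b =>
    have hab := (deleteEdges_edgeBoundary_adj.1 (p.adj_of_mem_edges he)).1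
    refine deleteEdges_edgeBoundary_adj.2 ⟨hab, ?_⟩
    rw [h a (hsupp a (p.fst_mem_support_of_mem_edges he)),
      h b (hsupp b (p.snd_mem_support_of_mem_edges he))]

lemma edgeBoundary_cutComponent_subset :
    edgeBoundary G (G.cutComponent X v) ⊆ edgeBoundary G X := by
  intro e he
  induction e using Sym2.ind with
  | _ a b =>
    rw [mk_mem_edgeBoundary_iff] at he ⊢
    refine ⟨he.1, fun hab => he.2 ?_⟩
    have hadj : (G.deleteEdges (edgeBoundary G X)).Adj a b :=
      deleteEdges_edgeBoundary_adj.2 ⟨he.1, hab⟩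
    exact ⟨fun ha => cutComponent_eq_of_mem ha ▸ mem_cutComponent_iff.2 hadj.symm.reachable,
      fun hb => cutComponent_eq_of_mem hb ▸ mem_cutComponent_iff.2 hadj.reachable⟩

lemma isRestrictedEdgeCut_edgeBoundary_iff (hG : G.Connected) :
    IsRestrictedEdgeCut G s (edgeBoundary G X) ↔
      X.Nonempty ∧ Xᶜ.Nonempty ∧ ∀ v, s ≤ (G.cutComponent X v).ncard := by
  constructor
  · rintro ⟨-, hdisc, hcomp⟩
    refine ⟨?_, ?_, fun v => hcomp _⟩ <;> by_contra! h <;> apply hdisc <;> convert hG using 1 <;>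
      ext a b <;> rw [deleteEdges_edgeBoundary_adj] <;> simp_all
  · rintro ⟨⟨u, hu⟩, ⟨v, hv⟩, hcomp⟩
    refine ⟨fun _ he => he.1, fun h => hv ?_, fun c => c.ind hcomp⟩
    exact (mem_iff_of_reachable_deleteEdges (h.preconnected u v)).1 hu

lemma edgeBoundary_subset_of_forall_mem_iff
    (h : ∀ v, ∀ w ∈ G.cutComponent X v, w ∈ Y ↔ v ∈ Y) :
    edgeBoundary G Y ⊆ edgeBoundary G X := by
  intro e he
  induction e using Sym2.ind with
  | _ a b =>
    rw [mk_mem_edgeBoundary_iff] at he ⊢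
    refine ⟨he.1, fun hab => he.2 (h b a ?_)⟩
    exact mem_cutComponent_iff.2 (deleteEdges_edgeBoundary_adj.2 ⟨he.1, hab⟩).reachable

variable (G) in
def absorbSmall (s : ℕ) (X : Set V) : Set V :=
  X ∪ {v | v ∉ X ∧ (G.cutComponent X v).ncard < s}

lemma subset_absorbSmall : X ⊆ G.absorbSmall s X := Set.subset_union_left

lemma mem_absorbSmall_iff_of_mem_cutComponent (h : w ∈ G.cutComponent X v) :
    w ∈ G.absorbSmall s X ↔ v ∈ G.absorbSmall s X := by
  simp only [absorbSmall, Set.mem_union, Set.mem_ofPred_eq, cutComponent_eq_of_mem h,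
    mem_iff_of_mem_cutComponent h]

lemma edgeBoundary_absorbSmall_subset : edgeBoundary G (G.absorbSmall s X) ⊆ edgeBoundary G X :=
  edgeBoundary_subset_of_forall_mem_iff fun _ _ => mem_absorbSmall_iff_of_mem_cutComponent

lemma cutComponent_subset_cutComponent_absorbSmall :
    G.cutComponent X v ⊆ G.cutComponent (G.absorbSmall s X) v :=
  cutComponent_subset_cutComponent fun _ => mem_absorbSmall_iff_of_mem_cutComponent

lemma le_ncard_cutComponent_absorbSmall [Finite V] (hv : v ∉ G.absorbSmall s X) :
    s ≤ (G.cutComponent (G.absorbSmall s X) v).ncard := by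
  have hvX : v ∉ X := fun h => hv (Or.inl h)
  have hbig : s ≤ (G.cutComponent X v).ncard := not_lt.1 fun h => hv (Or.inr ⟨hvX, h⟩)
  exact hbig.trans (Set.ncard_le_ncard cutComponent_subset_cutComponent_absorbSmall)

/-- A small component outside `X` is attached to `X` by an edge, which survives in
`G - ∇(absorbSmall s X)`. -/
lemma exists_cutComponent_subset_cutComponent_absorbSmall (hG : G.Connected) (hX : X.Nonempty)
    (hv : v ∈ G.absorbSmall s X) :
    ∃ u ∈ X, G.cutComponent X u ⊆ G.cutComponent (G.absorbSmall s X) v := by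
  rcases hv with hv | hvs
  · exact ⟨v, hv, cutComponent_subset_cutComponent_absorbSmall⟩
  have hvX := hvs.1
  obtain ⟨x, hx⟩ := hX
  obtain ⟨p⟩ := hG.preconnected v x
  obtain ⟨d, -, hd, hd'⟩ := p.exists_boundary_dart (G.cutComponent X v) mem_cutComponent_self
    fun h => hvX ((mem_iff_of_mem_cutComponent h).1 hx)
  have hfst : d.fst ∉ X := fun h => hvX ((mem_iff_of_mem_cutComponent hd).1 h)
  have hsnd : d.snd ∈ X := by
    by_contra h
    refine hd' (cutComponent_eq_of_mem hd ▸ mem_cutComponent_iff.2 ?_)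
    exact (deleteEdges_edgeBoundary_adj.2 ⟨d.adj, iff_of_false hfst h⟩).symm.reachable
  refine ⟨d.snd, hsnd, ?_⟩
  have hfst' : d.fst ∈ G.cutComponent (G.absorbSmall s X) v :=
    cutComponent_subset_cutComponent_absorbSmall hd
  have hadj : (G.deleteEdges (edgeBoundary G (G.absorbSmall s X))).Adj d.snd d.fst := by
    refine deleteEdges_edgeBoundary_adj.2 ⟨d.adj.symm, iff_of_true (subset_absorbSmall hsnd) ?_⟩
    exact (mem_absorbSmall_iff_of_mem_cutComponent hd).2 (Or.inr hvs)
  have hsnd' : d.snd ∈ G.cutComponent (G.absorbSmall s X) v :=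
    cutComponent_eq_of_mem hfst' ▸ mem_cutComponent_iff.2 hadj.reachable
  rw [← cutComponent_eq_of_mem hsnd']
  exact cutComponent_subset_cutComponent_absorbSmall

lemma absorbSmall_subset [Finite V] (hXY : X ⊆ Y) (hY : ∀ v ∉ Y, s ≤ (G.cutComponent Y v).ncard) :
    G.absorbSmall s X ⊆ Y := by
  rintro v (hv | ⟨hvX, hsmall⟩)
  · exact hXY hv
  by_contra hvY
  have hsub : G.cutComponent Y v ⊆ G.cutComponent X v :=
    cutComponent_subset_cutComponent fun w hw =>
      iff_of_false (fun h => hvY ((mem_iff_of_mem_cutComponent hw).1 (hXY h))) hvX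
  exact (hY v hvY).not_gt (hsmall.trans_le' (Set.ncard_le_ncard hsub))

lemma le_ncard_cutComponent_compl_absorbSmall_compl [Finite V] (hG : G.Connected)
    (hY : Yᶜ.Nonempty) (hYs : ∀ v ∉ Y, s ≤ (G.cutComponent Y v).ncard) (v : V) :
    s ≤ (G.cutComponent (G.absorbSmall s Yᶜ)ᶜ v).ncard := by
  rw [cutComponent_compl]
  by_cases hv : v ∈ G.absorbSmall s Yᶜ
  · obtain ⟨u, hu, hsub⟩ := exists_cutComponent_subset_cutComponent_absorbSmall hG hY hv
    rw [cutComponent_compl] at hsub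
    exact (hYs u hu).trans (Set.ncard_le_ncard hsub)
  · exact le_ncard_cutComponent_absorbSmall hv

lemma ncard_edgeBoundary_add_ncard_edgeBoundary_le [Finite V] {C D : Set V} (hCD : Disjoint C D)
    (hCX : C ⊆ X) (hDX : D ⊆ X) (hC : edgeBoundary G C ⊆ edgeBoundary G X)
    (hD : edgeBoundary G D ⊆ edgeBoundary G X) :
    (edgeBoundary G C).ncard + (edgeBoundary G D).ncard ≤ (edgeBoundary G X).ncard := by
  have hdisj : Disjoint (edgeBoundary G C) (edgeBoundary G D) := by
    refine Set.disjoint_left.2 fun e heC heD => ?_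
    induction e using Sym2.ind with
    | _ a b =>
      have heX := hC heC
      rw [mk_mem_edgeBoundary_iff] at heC heD heX
      have := @hCX a; have := @hCX b; have := @hDX a; have := @hDX b
      have : a ∈ C → a ∉ D := fun h => Set.disjoint_left.1 hCD h
      have : b ∈ C → b ∉ D := fun h => Set.disjoint_left.1 hCD h
      tauto
  rw [← Set.ncard_union_eq hdisj]
  exact Set.ncard_le_ncard (Set.union_subset hC hD)

lemma eq_of_edgeBoundary_eq (hG : G.Connected) (hBS : B ⊆ S) (hB : B.Nonempty)
    (h : edgeBoundary G B = edgeBoundary G S) : B = S := by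
  by_contra hne
  obtain ⟨x, hx⟩ := Set.sdiff_nonempty.2 fun h' => hne (hBS.antisymm h')
  obtain ⟨b, hb⟩ := hB
  obtain ⟨p⟩ := hG.preconnected x b
  obtain ⟨d, -, hd, hd'⟩ := p.exists_boundary_dart (S \ B) hx fun h' => h'.2 hb
  have he := Set.ext_iff.1 h s(d.fst, d.snd)
  rw [mk_mem_edgeBoundary_iff, mk_mem_edgeBoundary_iff] at he
  have := d.adj; have := @hBS d.fst; have := @hBS d.snd
  simp only [Set.mem_sdiff, not_and, not_not] at hd hd'
  tauto

section

variable [Fintype V] [DecidableEq V] [DecidableRel G.Adj]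

lemma ncard_edgeBoundary_coe_eq_sum (F : Finset V) :
    (edgeBoundary G F).ncard = ∑ v ∈ F, #(G.neighborFinset v \ F) := by
  have hset : edgeBoundary G F =
      ↑((F.sigma fun v => G.neighborFinset v \ F).image fun p => s(p.1, p.2)) := by
    ext e
    induction e using Sym2.ind with
    | _ a b =>
      simp only [mk_mem_edgeBoundary_iff, Finset.coe_image, Set.mem_image, Finset.mem_coe,
        Finset.mem_sigma, Finset.mem_sdiff, mem_neighborFinset, Sym2.eq_iff, Sigma.exists]
      constructor
      · rintro ⟨h, hab⟩
        by_cases ha : a ∈ F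
        · exact ⟨a, b, ⟨ha, h, by tauto⟩, Or.inl ⟨rfl, rfl⟩⟩
        · exact ⟨b, a, ⟨by tauto, h.symm, ha⟩, Or.inr ⟨rfl, rfl⟩⟩
      · rintro ⟨x, y, ⟨hx, h, hy⟩, ⟨rfl, rfl⟩ | ⟨rfl, rfl⟩⟩
        · exact ⟨h, by tauto⟩
        · exact ⟨h.symm, by tauto⟩
  rw [hset, Set.ncard_coe_finset, Finset.card_image_of_injOn, Finset.card_sigma]
  rintro ⟨a, b⟩ hab ⟨c, d⟩ hcd h
  simp only [Finset.coe_sigma, Set.mem_sigma_iff, Finset.mem_coe, Finset.mem_sdiff] at hab hcd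
  rcases Sym2.eq_iff.1 h with ⟨rfl, rfl⟩ | ⟨rfl, rfl⟩
  · rfl
  · exact absurd hab.1 hcd.2.2

lemma ncard_edgeBoundary_add_sum_card_inter (hreg : G.IsRegularOfDegree k) (F : Finset V) :
    (edgeBoundary G F).ncard + ∑ v ∈ F, #(G.neighborFinset v ∩ F) = k * #F := by
  rw [ncard_edgeBoundary_coe_eq_sum, ← Finset.sum_add_distrib]
  simp_rw [Finset.card_sdiff_add_card_inter, card_neighborFinset_eq_degree, hreg.degree_eq]
  simp [mul_comm]

lemma two_mul_sum_card_inter_le_sq (htri : G.CliqueFree 3) (F : Finset V) :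
    2 * ∑ v ∈ F, #(G.neighborFinset v ∩ F) ≤ #F ^ 2 := by
  have hdeg : ∑ v ∈ F, #(G.neighborFinset v ∩ F) = ∑ v, (G.induce (F : Set V)).degree v := by
    rw [← Finset.sum_coe_sort F]
    refine Finset.sum_congr rfl fun v _ => ?_
    rw [← card_neighborFinset_eq_degree, ← card_map (.subtype _)]
    congr 1
    ext x
    simp
  have hfree : (G.induce (F : Set V)).CliqueFree (2 + 1) :=
    htri.comap (Embedding.induce _).isContained
  have hmantel := hfree.card_edgeFinset_le
  rw [hdeg, sum_degrees_eq_twice_card_edges]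
  simp only [Finset.coe_sort_coe, Fintype.card_coe, Nat.add_one_sub_one, mul_one] at hmantel
  have hchoose : (#F % 2).choose 2 = 0 := Nat.choose_eq_zero_of_lt (by omega)
  rw [hchoose, add_zero] at hmantel
  generalize #F ^ 2 = m at *
  omega

lemma two_mul_mul_ncard_le (hreg : G.IsRegularOfDegree k) (htri : G.CliqueFree 3) (C : Set V) :
    2 * k * C.ncard ≤ 2 * (edgeBoundary G C).ncard + C.ncard ^ 2 := by
  lift C to Finset V using C.toFinite
  have h1 := ncard_edgeBoundary_add_sum_card_inter hreg C
  have h2 := two_mul_sum_card_inter_le_sq htri C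
  rw [Set.ncard_coe_finset]
  linarith

lemma three_mul_lt_ncard_edgeBoundary (hreg : G.IsRegularOfDegree k) (htri : G.CliqueFree 3)
    (hk : 5 ≤ k) (hs : 4 ≤ s) (hs' : s ≤ 8) (hX : s ≤ X.ncard)
    (hsmall : ∀ v ∈ X, (G.cutComponent X v).ncard < s) :
    3 * k < (edgeBoundary G X).ncard := by
  by_cases hbig : ∃ v ∈ X, 3 ≤ (G.cutComponent X v).ncard
  -- A piece with `3 ≤ m ≤ 7` vertices has more than `2k` boundary edges, any other piece `≥ k`.
  · obtain ⟨v, hv, h3⟩ := hbig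
    obtain ⟨w, hwX, hw⟩ : ∃ w ∈ X, w ∉ G.cutComponent X v := by
      by_contra! h
      exact (hsmall v hv).not_ge (hX.trans (Set.ncard_le_ncard h))
    have hsum := ncard_edgeBoundary_add_ncard_edgeBoundary_le (disjoint_cutComponent hw)
      (cutComponent_subset hv) (cutComponent_subset hwX) edgeBoundary_cutComponent_subset
      edgeBoundary_cutComponent_subset
    have hv' := two_mul_mul_ncard_le hreg htri (G.cutComponent X v)
    have hw' := two_mul_mul_ncard_le hreg htri (G.cutComponent X w)
    have hw1 : 0 < (G.cutComponent X w).ncard :=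
      (Set.ncard_pos (Set.toFinite _)).2 ⟨w, mem_cutComponent_self⟩
    have hv7 : _ < 8 := (hsmall v hv).trans_le hs'
    have hw7 : _ < 8 := (hsmall w hwX).trans_le hs'
    generalize (G.cutComponent X v).ncard = m at *
    generalize (G.cutComponent X w).ncard = m' at *
    interval_cases m <;> interval_cases m' <;> omega
  -- Otherwise `G[X]` has maximum degree at most one, so `d(X) ≥ (k - 1) |X|`.
  · simp only [not_exists, not_and, not_le] at hbig
    lift X to Finset V using X.toFinite
    have hdeg : ∀ v ∈ X, #(G.neighborFinset v ∩ X) ≤ 1 := by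
      intro v hv
      by_contra! h2
      obtain ⟨a, ha, b, hb, hab⟩ := Finset.one_lt_card.1 h2
      simp only [Finset.mem_inter, mem_neighborFinset] at ha hb
      have hmem : ∀ {x}, G.Adj v x → x ∈ X → x ∈ G.cutComponent X v := fun hx hxX =>
        mem_cutComponent_iff.2
          (deleteEdges_edgeBoundary_adj.2 ⟨hx.symm, iff_of_true hxX hv⟩).reachable
      have hsub : {v, a, b} ⊆ G.cutComponent X v := by
        simp only [Set.insert_subset_iff, Set.singleton_subset_iff]
        exact ⟨mem_cutComponent_self, hmem ha.1 ha.2, hmem hb.1 hb.2⟩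
      have h3 := Set.ncard_le_ncard hsub
      rw [Set.ncard_eq_three.2 ⟨v, a, b, ha.1.ne, hb.1.ne, hab, rfl⟩] at h3
      exact (hbig v hv).not_ge h3
    have h1 := ncard_edgeBoundary_add_sum_card_inter hreg X
    have h2 : ∑ v ∈ X, #(G.neighborFinset v ∩ X) ≤ #X := by
      simpa using Finset.sum_le_sum hdeg
    rw [Set.ncard_coe_finset] at hX
    nlinarith

theorem _root_.IsLambdaAtom.eq_of_subset (hS : IsLambdaAtom G s S) (hconn : G.Connected)
    (htri : G.CliqueFree 3) (hreg : G.IsRegularOfDegree k) (hk : 5 ≤ k) (hs : 4 ≤ s) (hs' : s ≤ 8)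
    (hlam : lambdaS G s ≤ 3 * k) (hBS : B ⊆ S) (hB : s ≤ B.ncard)
    (hdB : (edgeBoundary G B).ncard ≤ lambdaS G s) : B = S := by
  obtain ⟨⟨hScut, hSlam⟩, hSmin⟩ := hS
  obtain ⟨-, hSc, hScomp⟩ := (isRestrictedEdgeCut_edgeBoundary_iff hconn).1 hScut
  set B₂ := G.absorbSmall s B
  -- dropping the small components inside `B₂` is absorbing the small ones outside `B₂ᶜ`
  set B₃ := (G.absorbSmall s B₂ᶜ)ᶜ
  have hB₂S : B₂ ⊆ S := absorbSmall_subset hBS fun v _ => hScomp v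
  have hB₃B₂ : B₃ ⊆ B₂ := Set.compl_subset_comm.1 subset_absorbSmall
  have hB₂c : B₂ᶜ.Nonempty := hSc.mono (Set.compl_subset_compl.2 hB₂S)
  have hdB₂ : edgeBoundary G B₂ ⊆ edgeBoundary G B := edgeBoundary_absorbSmall_subset
  have hdB₃ : edgeBoundary G B₃ ⊆ edgeBoundary G B₂ := by
    rw [edgeBoundary_compl, ← edgeBoundary_compl G B₂]
    exact edgeBoundary_absorbSmall_subset
  rcases B₃.eq_empty_or_nonempty with h₃ | h₃
  · have hsmall : ∀ v ∈ B₂, (G.cutComponent B₂ v).ncard < s := by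
      intro v hv
      have hv' : v ∈ G.absorbSmall s B₂ᶜ := Set.compl_empty_iff.1 h₃ ▸ Set.mem_univ v
      rcases hv' with h | ⟨-, h⟩
      · exact absurd hv h
      · rwa [cutComponent_compl] at h
    have : 3 * k < (edgeBoundary G B₂).ncard :=
      three_mul_lt_ncard_edgeBoundary hreg htri hk hs hs'
        (hB.trans (Set.ncard_le_ncard subset_absorbSmall)) hsmall
    have := Set.ncard_le_ncard hdB₂
    omega
  · have hcut : IsRestrictedEdgeCut G s (edgeBoundary G B₃) :=
      (isRestrictedEdgeCut_edgeBoundary_iff hconn).2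
        ⟨h₃, hB₂c.mono (Set.compl_subset_compl.2 hB₃B₂),
          le_ncard_cutComponent_compl_absorbSmall_compl hconn hB₂c
            fun _ => le_ncard_cutComponent_absorbSmall⟩
    have hlam₃ : lambdaS G s ≤ (edgeBoundary G B₃).ncard := Nat.sInf_le ⟨_, hcut, rfl⟩
    have h₃₂ := Set.ncard_le_ncard hdB₃
    have h₂ := Set.ncard_le_ncard hdB₂
    have hB₃S : B₃ = S :=
      Set.eq_of_subset_of_ncard_le (hB₃B₂.trans hB₂S) (hSmin B₃ ⟨hcut, by omega⟩)
    have hB₂S' : B₂ = S := hB₂S.antisymm (hB₃S ▸ hB₃B₂)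
    refine eq_of_edgeBoundary_eq hconn hBS (Set.nonempty_of_ncard_ne_zero (by omega)) ?_
    exact (Set.eq_of_subset_of_ncard_le (hB₂S' ▸ hdB₂) (by omega)).symm

end

end SimpleGraph

theorem statement8_general {V : Type*} [Fintype V] [DecidableEq V]
    (G : SimpleGraph V) [DecidableRel G.Adj] (k s : ℕ)
    (hconn : G.Connected) (htri : G.CliqueFree 3)
    (hreg : G.IsRegularOfDegree k) (hk : 5 ≤ k)
    (hs1 : 4 ≤ s) (hs2 : s ≤ 8)
    (hlam : lambdaS G s ≤ 3 * k)
    (S : Set V) (hS : IsLambdaAtom G s S)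
    (A : Set V) (hA : A ⊆ S) (hA1 : 1 ≤ A.ncard) (hA2 : A.ncard ≤ S.ncard - s) :
    (edgeBoundary G A).ncard < 2 * (inducedEdgeBoundary G S A).ncard := by
  by_contra! h
  have hcount := ncard_edgeBoundary_sdiff_add (G := G) hA
  have hdiff : S \ A = S := hS.eq_of_subset hconn htri hreg hk hs1 hs2 hlam Set.sdiff_subset
    (by rw [Set.ncard_sdiff hA]; omega) (by rw [hS.1.2] at hcount; omega)
  obtain ⟨a, ha⟩ := Set.nonempty_of_ncard_ne_zero (s := A) (by omega)
  have ha' : a ∈ S \ A := by rw [hdiff]; exact hA ha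
  exact ha'.2 ha

/-- (Lemma 3.1(b)) With `G` connected triangle-free
vertex-transitive of degree `k ≥ 5`, `4 ≤ s ≤ 8`, `λ_s(G)` existing and at most
`3k`, and `S` a `λ_s`-atom of `G`: for every `A ⊆ S` with `1 ≤ |A| ≤ |S| − s`,
we have `d_{G[S]}(A) > d_G(A)/2`. -/
theorem statement8 {V : Type*} [Fintype V] [DecidableEq V]
    (G : SimpleGraph V) [DecidableRel G.Adj] (k s : ℕ)
    (hconn : G.Connected) (htri : G.CliqueFree 3) (hvt : VertexTransitive G)
    (hreg : G.IsRegularOfDegree k) (hk : 5 ≤ k)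
    (hs1 : 4 ≤ s) (hs2 : s ≤ 8)
    (hex : ∃ F : Set (Sym2 V), IsRestrictedEdgeCut G s F)
    (hlam : lambdaS G s ≤ 3 * k)
    (S : Set V) (hS : IsLambdaAtom G s S)
    (A : Set V) (hA : A ⊆ S) (hA1 : 1 ≤ A.ncard) (hA2 : A.ncard ≤ S.ncard - s) :
    (edgeBoundary G A).ncard < 2 * (inducedEdgeBoundary G S A).ncard :=
  statement8_general G k s hconn htri hreg hk hs1 hs2 hlam S hS A hA hA1 hA2
end
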